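/- arXiv:2007.15438 — 7 statements merged into one kernel-verified Lean document; each statement's English description precedes it below -/
import Mathlib

section
/- Let n ≥ 1, let V be an n×n matrix with nonnegative real entries, and let s, t > 0. Then the Regularized Master Equations admit a unique solution (r, r̃) with all entries strictly positive, and this solution satisfies Σ_{i=1}^n r_i = Σ_{i=1}^n r̃_i. -/
/-!
Writing `x = (r, r̃)` on `Fin n ⊕ Fin n`, the equations say `x = T x` for
`T x = 1 / (t + A x + s² / (t + B x))` with the nonnegative block matrices
`A = [0 V; Vᵀ 0]` and `B = [Vᵀ 0; 0 V]`. Every positive fixed point lies in a box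
`[1/Λ, 1/t]` that `T` maps into itself, and on that box `T` turns a two-sided ratio bound
`x ≤ (1 + δ) y`, `y ≤ (1 + δ) x` into the same bound with `δ` replaced by `(1 - t/Λ) δ`.
So the iterates of `T` from a corner of the box form a Cauchy sequence whose limit is a
fixed point, and two fixed points are `(1 + (1 - t/Λ)ᵐ δ)`-close for every `m`, hence equal.
The two sums agree because `r_i ((V r̃)_i + t) = r̃_i ((Vᵀ r)_i + t)` and
`r ⬝ (V r̃) = r̃ ⬝ (Vᵀ r)`.
-/

open Matrix Finset

/-- The Regularized Master Equations associated with a nonnegative `n × n` matrix `V`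
and parameters `s, t`: the unknowns `r, r̃ ∈ ℝⁿ` have positive entries and satisfy
`r_i = ((Vᵀ r)_i + t) / (s² + ((V r̃)_i + t)((Vᵀ r)_i + t))` and
`r̃_i = ((V r̃)_i + t) / (s² + ((V r̃)_i + t)((Vᵀ r)_i + t))`. -/
def RegME {n : ℕ} (V : Matrix (Fin n) (Fin n) ℝ) (s t : ℝ)
    (r rt : Fin n → ℝ) : Prop :=
  (∀ i, 0 < r i) ∧ (∀ i, 0 < rt i) ∧
  (∀ i, r i = ((Vᵀ.mulVec r) i + t) /
      (s ^ 2 + ((V.mulVec rt) i + t) * ((Vᵀ.mulVec r) i + t))) ∧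
  (∀ i, rt i = ((V.mulVec rt) i + t) /
      (s ^ 2 + ((V.mulVec rt) i + t) * ((Vᵀ.mulVec r) i + t)))

open Set Function Filter Topology

section RatioContraction

variable {K : Type*}

/-- In terms of Thompson's part metric, `d(x, y) ≤ log (1 + δ)`. -/
def RatioClose (δ : ℝ) (x y : K → ℝ) : Prop :=
  x ≤ (1 + δ) • y ∧ y ≤ (1 + δ) • x

theorem RatioClose.symm {δ : ℝ} {x y : K → ℝ} (h : RatioClose δ x y) : RatioClose δ y x :=
  ⟨h.2, h.1⟩

theorem ratioClose_of_mem_Icc {a b : ℝ} (ha : 0 < a) {x y : K → ℝ}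
    (hx : x ∈ Icc (const K a) (const K b)) (hy : y ∈ Icc (const K a) (const K b)) :
    RatioClose (b / a - 1) x y := by
  have key : ∀ {u v : K → ℝ}, u ∈ Icc (const K a) (const K b) →
      v ∈ Icc (const K a) (const K b) → u ≤ (1 + (b / a - 1)) • v := by
    intro u v hu hv k
    calc u k ≤ b := hu.2 k
      _ = b / a * a := by field_simp
      _ ≤ b / a * v k := by
        gcongr
        · exact div_nonneg (ha.le.trans ((hu.1 k).trans (hu.2 k))) ha.le
        · exact hv.1 k
      _ = ((1 + (b / a - 1)) • v) k := by simp
  exact ⟨key hx hy, key hy hx⟩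

theorem RatioClose.dist_le [Fintype K] {δ b : ℝ} {x y : K → ℝ} (h : RatioClose δ x y) (hδ : 0 ≤ δ)
    (hb : 0 ≤ b) (hx : x ≤ const K b) (hy : y ≤ const K b) : dist x y ≤ δ * b := by
  refine (dist_pi_le_iff (mul_nonneg hδ hb)).2 fun k => ?_
  rw [Real.dist_eq, abs_sub_le_iff]
  have h₁ := h.1 k
  have h₂ := h.2 k
  simp only [Pi.smul_apply, smul_eq_mul] at h₁ h₂
  constructor <;> nlinarith [hx k, hy k, show const K b k = b from rfl]

variable {T : (K → ℝ) → K → ℝ} {S : Set (K → ℝ)} {c : ℝ}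

theorem ratioClose_iterate (hc : 0 ≤ c) (hmaps : MapsTo T S S)
    (hT : ∀ x ∈ S, ∀ y ∈ S, ∀ δ, 0 ≤ δ → RatioClose δ x y → RatioClose (c * δ) (T x) (T y))
    {δ : ℝ} (hδ : 0 ≤ δ) {x y : K → ℝ} (hx : x ∈ S) (hy : y ∈ S) (hxy : RatioClose δ x y)
    (m : ℕ) : RatioClose (c ^ m * δ) (T^[m] x) (T^[m] y) := by
  induction m generalizing x y δ with
  | zero => simpa using hxy
  | succ m ih =>
    rw [iterate_succ_apply, iterate_succ_apply, pow_succ, mul_assoc]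
    exact ih (mul_nonneg hc hδ) (hmaps hx) (hmaps hy) (hT x hx y hy δ hδ hxy)

theorem existsUnique_isFixedPt_of_ratioClose [Fintype K] {a b : ℝ} (ha : 0 < a) (hab : a ≤ b)
    (hc0 : 0 ≤ c) (hc1 : c < 1)
    (hmaps : MapsTo T (Icc (const K a) (const K b)) (Icc (const K a) (const K b)))
    (hcont : ∀ x ∈ Icc (const K a) (const K b), ContinuousAt T x)
    (hT : ∀ x ∈ Icc (const K a) (const K b), ∀ y ∈ Icc (const K a) (const K b), ∀ δ, 0 ≤ δ →
      RatioClose δ x y → RatioClose (c * δ) (T x) (T y)) :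
    ∃! x, x ∈ Icc (const K a) (const K b) ∧ IsFixedPt T x := by
  set S := Icc (const K a) (const K b)
  have hδ : 0 ≤ b / a - 1 := by rw [sub_nonneg, one_le_div ha]; exact hab
  have hb : 0 ≤ b := ha.le.trans hab
  have hdist : ∀ x ∈ S, ∀ y ∈ S, ∀ m, dist (T^[m] x) (T^[m] y) ≤ (b / a - 1) * b * c ^ m := by
    intro x hx y hy m
    have := (ratioClose_iterate hc0 hmaps hT hδ hx hy (ratioClose_of_mem_Icc ha hx hy) m).dist_le
      (mul_nonneg (pow_nonneg hc0 m) hδ) hb ((hmaps.iterate m hx).2) ((hmaps.iterate m hy).2)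
    linarith
  have hb_mem : const K b ∈ S := right_mem_Icc.2 fun _ => hab
  have hstep : ∀ m, dist (T^[m] (const K b)) (T^[m + 1] (const K b)) ≤ (b / a - 1) * b * c ^ m :=
    fun m => by rw [iterate_succ_apply]; exact hdist _ hb_mem _ (hmaps hb_mem) m
  obtain ⟨x, hx⟩ := cauchySeq_tendsto_of_complete (cauchySeq_of_le_geometric c _ hc1 hstep)
  have hxS : x ∈ S := isClosed_Icc.mem_of_tendsto hx (Eventually.of_forall fun m =>
    hmaps.iterate m hb_mem)
  refine ⟨x, ⟨hxS, isFixedPt_of_tendsto_iterate hx (hcont x hxS)⟩, fun y ⟨hyS, hy⟩ => ?_⟩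
  have hle : ∀ m, dist y x ≤ (b / a - 1) * b * c ^ m := fun m => by
    simpa only [iterate_fixed hy, iterate_fixed (isFixedPt_of_tendsto_iterate hx (hcont x hxS))]
      using hdist y hyS x hxS m
  have hlim := (tendsto_pow_atTop_nhds_zero_of_lt_one hc0 hc1).const_mul ((b / a - 1) * b)
  rw [mul_zero] at hlim
  exact dist_le_zero.1 (ge_of_tendsto' hlim hle)

end RatioContraction

theorem Matrix.mulVec_mono_of_nonneg {ι R : Type*} [Fintype ι] [Semiring R] [PartialOrder R]
    [IsOrderedRing R] {M : Matrix ι ι R} (hM : ∀ i j, 0 ≤ M i j) {x y : ι → R} (h : x ≤ y) :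
    M *ᵥ x ≤ M *ᵥ y := fun i =>
  Finset.sum_le_sum fun j _ => mul_le_mul_of_nonneg_left (h j) (hM i j)

theorem Matrix.mulVec_nonneg_of_nonneg {ι R : Type*} [Fintype ι] [Semiring R] [PartialOrder R]
    [IsOrderedRing R] {M : Matrix ι ι R} (hM : ∀ i j, 0 ≤ M i j) {x : ι → R} (hx : 0 ≤ x)
    (i : ι) : 0 ≤ (M *ᵥ x) i := by
  simpa using mulVec_mono_of_nonneg hM hx i

theorem Matrix.fromBlocks_nonneg {l m n o R : Type*} [Zero R] [LE R] {A : Matrix n l R}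
    {B : Matrix n m R} {C : Matrix o l R} {D : Matrix o m R}
    (hA : ∀ i j, 0 ≤ A i j) (hB : ∀ i j, 0 ≤ B i j) (hC : ∀ i j, 0 ≤ C i j)
    (hD : ∀ i j, 0 ≤ D i j) : ∀ i j, 0 ≤ fromBlocks A B C D i j := by
  rintro (i | i) (j | j) <;> simp [hA, hB, hC, hD]

section MasterMap

variable {K : Type*} [Fintype K] {A B : Matrix K K ℝ} {s t : ℝ}

noncomputable def masterDenom (A B : Matrix K K ℝ) (s t : ℝ) (x : K → ℝ) : K → ℝ :=
  fun k => t + (A *ᵥ x) k + s ^ 2 / (t + (B *ᵥ x) k)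

noncomputable def masterMap (A B : Matrix K K ℝ) (s t : ℝ) (x : K → ℝ) : K → ℝ :=
  (masterDenom A B s t x)⁻¹

noncomputable def masterBound (A : Matrix K K ℝ) (s t : ℝ) : ℝ :=
  t + ∑ k, (A *ᵥ const K t⁻¹) k + s ^ 2 / t

theorem le_masterDenom (hA : ∀ i j, 0 ≤ A i j) (hB : ∀ i j, 0 ≤ B i j) (ht : 0 < t)
    {x : K → ℝ} (hx : 0 ≤ x) (k : K) : t ≤ masterDenom A B s t x k := by
  have hAx := mulVec_nonneg_of_nonneg hA hx k
  have hBx := mulVec_nonneg_of_nonneg hB hx k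
  have : 0 ≤ s ^ 2 / (t + (B *ᵥ x) k) := by positivity
  simp only [masterDenom]
  linarith

theorem masterDenom_le_masterBound (hA : ∀ i j, 0 ≤ A i j) (hB : ∀ i j, 0 ≤ B i j) (ht : 0 < t)
    {x : K → ℝ} (hx : x ∈ Icc 0 (const K t⁻¹)) (k : K) :
    masterDenom A B s t x k ≤ masterBound A s t := by
  have hAx : (A *ᵥ x) k ≤ ∑ k, (A *ᵥ const K t⁻¹) k :=
    (mulVec_mono_of_nonneg hA hx.2 k).trans <| single_le_sum
      (fun k _ => mulVec_nonneg_of_nonneg hA (fun _ => (inv_pos.2 ht).le) k) (mem_univ k)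
  have hBx : s ^ 2 / (t + (B *ᵥ x) k) ≤ s ^ 2 / t :=
    div_le_div_of_nonneg_left (sq_nonneg s) ht (by linarith [mulVec_nonneg_of_nonneg hB hx.1 k])
  simp only [masterDenom, masterBound]
  linarith

theorem le_masterBound (hA : ∀ i j, 0 ≤ A i j) (ht : 0 < t) : t ≤ masterBound A s t := by
  have : 0 ≤ ∑ k, (A *ᵥ const K t⁻¹) k :=
    sum_nonneg fun k _ => mulVec_nonneg_of_nonneg hA (fun _ => (inv_pos.2 ht).le) k
  have : 0 ≤ s ^ 2 / t := by positivity
  simp only [masterBound]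
  linarith

theorem masterMap_le (hA : ∀ i j, 0 ≤ A i j) (hB : ∀ i j, 0 ≤ B i j) (ht : 0 < t)
    {x : K → ℝ} (hx : 0 ≤ x) : masterMap A B s t x ≤ const K t⁻¹ := fun k =>
  inv_anti₀ ht (le_masterDenom hA hB ht hx k)

theorem masterMap_mem_Icc (hA : ∀ i j, 0 ≤ A i j) (hB : ∀ i j, 0 ≤ B i j) (ht : 0 < t)
    {x : K → ℝ} (hx : x ∈ Icc 0 (const K t⁻¹)) :
    masterMap A B s t x ∈ Icc (const K (masterBound A s t)⁻¹) (const K t⁻¹) :=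
  ⟨fun k => inv_anti₀ (ht.trans_le (le_masterDenom hA hB ht hx.1 k))
    (masterDenom_le_masterBound hA hB ht hx k), masterMap_le hA hB ht hx.1⟩

theorem masterDenom_le_smul (hA : ∀ i j, 0 ≤ A i j) (hB : ∀ i j, 0 ≤ B i j) (ht : 0 < t)
    {x y : K → ℝ} (hx : 0 ≤ x) (hy : 0 ≤ y) {δ : ℝ} (hδ : 0 ≤ δ) (hxy : RatioClose δ x y)
    (k : K) : masterDenom A B s t y k ≤ (1 + δ) * masterDenom A B s t x k - δ * t := by
  have hAyx : (A *ᵥ y) k ≤ (1 + δ) * (A *ᵥ x) k := by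
    simpa [mulVec_smul] using mulVec_mono_of_nonneg hA hxy.2 k
  have hBxy : (B *ᵥ x) k ≤ (1 + δ) * (B *ᵥ y) k := by
    simpa [mulVec_smul] using mulVec_mono_of_nonneg hB hxy.1 k
  have hBx := mulVec_nonneg_of_nonneg hB hx k
  have hBy := mulVec_nonneg_of_nonneg hB hy k
  have hden : t + (B *ᵥ x) k ≤ (1 + δ) * (t + (B *ᵥ y) k) := by nlinarith
  have hfrac : s ^ 2 / (t + (B *ᵥ y) k) ≤ (1 + δ) * (s ^ 2 / (t + (B *ᵥ x) k)) := by
    rw [mul_div_assoc', div_le_div_iff₀ (by positivity) (by positivity)]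
    nlinarith [mul_le_mul_of_nonneg_left hden (sq_nonneg s)]
  simp only [masterDenom]
  nlinarith

theorem masterMap_le_smul (hA : ∀ i j, 0 ≤ A i j) (hB : ∀ i j, 0 ≤ B i j) (ht : 0 < t)
    {x y : K → ℝ} (hx : x ∈ Icc 0 (const K t⁻¹)) (hy : 0 ≤ y) {δ : ℝ} (hδ : 0 ≤ δ)
    (hxy : RatioClose δ x y) :
    masterMap A B s t x ≤ (1 + (1 - t / masterBound A s t) * δ) • masterMap A B s t y := by
  intro k
  set Λ := masterBound A s t
  have hΛ : 0 < Λ := ht.trans_le (le_masterBound hA ht)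
  have hDx := le_masterDenom (s := s) hA hB ht hx.1 k
  have hDy := le_masterDenom (s := s) hA hB ht hy k
  -- the `- δ t` in `masterDenom_le_smul` absorbs a fraction `t / Λ` of `δ • masterDenom x`
  have hfrac : t / Λ * masterDenom A B s t x k ≤ t := by
    rw [div_mul_eq_mul_div, div_le_iff₀ hΛ]
    nlinarith [masterDenom_le_masterBound (s := s) hA hB ht hx k]
  have key : masterDenom A B s t y k ≤ masterDenom A B s t x k * (1 + (1 - t / Λ) * δ) := by
    nlinarith [masterDenom_le_smul (s := s) hA hB ht hx.1 hy hδ hxy k,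
      mul_le_mul_of_nonneg_left hfrac hδ]
  simp only [masterMap, Pi.inv_apply, Pi.smul_apply, smul_eq_mul, ← div_eq_mul_inv]
  rwa [le_div_iff₀ (by linarith), inv_mul_le_iff₀ (by linarith)]

theorem masterMap_ratioClose (hA : ∀ i j, 0 ≤ A i j) (hB : ∀ i j, 0 ≤ B i j) (ht : 0 < t)
    {x y : K → ℝ} (hx : x ∈ Icc 0 (const K t⁻¹)) (hy : y ∈ Icc 0 (const K t⁻¹)) {δ : ℝ}
    (hδ : 0 ≤ δ) (hxy : RatioClose δ x y) :
    RatioClose ((1 - t / masterBound A s t) * δ) (masterMap A B s t x) (masterMap A B s t y) :=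
  ⟨masterMap_le_smul hA hB ht hx hy.1 hδ hxy, masterMap_le_smul hA hB ht hy hx.1 hδ hxy.symm⟩

theorem continuousAt_masterMap (hA : ∀ i j, 0 ≤ A i j) (hB : ∀ i j, 0 ≤ B i j) (ht : 0 < t)
    {x : K → ℝ} (hx : 0 ≤ x) : ContinuousAt (masterMap A B s t) x := by
  refine continuousAt_pi.2 fun k => ContinuousAt.inv₀ ?_
    (ht.trans_le (le_masterDenom hA hB ht hx k)).ne'
  have hBx := mulVec_nonneg_of_nonneg hB hx k
  unfold masterDenom
  exact (continuousAt_const.add (by fun_prop)).add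
    (continuousAt_const.div (continuousAt_const.add (by fun_prop)) (by positivity))

theorem existsUnique_isFixedPt_masterMap (hA : ∀ i j, 0 ≤ A i j) (hB : ∀ i j, 0 ≤ B i j)
    (ht : 0 < t) : ∃! x : K → ℝ, (∀ k, 0 < x k) ∧ IsFixedPt (masterMap A B s t) x := by
  set Λ := masterBound A s t
  have hΛ : t ≤ Λ := le_masterBound hA ht
  have hΛpos : 0 < Λ := ht.trans_le hΛ
  have hsub : Icc (const K Λ⁻¹) (const K t⁻¹) ⊆ Icc 0 (const K t⁻¹) :=
    Icc_subset_Icc_left fun _ => (inv_pos.2 hΛpos).le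
  have hpos_iff : ∀ x, IsFixedPt (masterMap A B s t) x →
      ((∀ k, 0 < x k) ↔ x ∈ Icc (const K Λ⁻¹) (const K t⁻¹)) := by
    refine fun x hx => ⟨fun hpos => ?_, fun hmem k => (inv_pos.2 hΛpos).trans_le (hmem.1 k)⟩
    have hx0 : 0 ≤ x := fun k => (hpos k).le
    have hxle : x ≤ const K t⁻¹ := hx.eq ▸ masterMap_le hA hB ht hx0
    exact hx.eq ▸ masterMap_mem_Icc hA hB ht ⟨hx0, hxle⟩
  obtain ⟨x, ⟨hxI, hfix⟩, huniq⟩ := existsUnique_isFixedPt_of_ratioClose (inv_pos.2 hΛpos)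
    (inv_anti₀ ht hΛ) (sub_nonneg.2 ((div_le_one hΛpos).2 hΛ)) (sub_lt_self _ (div_pos ht hΛpos))
    (fun x hx => masterMap_mem_Icc hA hB ht (hsub hx))
    (fun x hx => continuousAt_masterMap hA hB ht (hsub hx).1)
    (fun x hx y hy δ hδ hxy => masterMap_ratioClose hA hB ht (hsub hx) (hsub hy) hδ hxy)
  exact ⟨x, ⟨(hpos_iff x hfix).2 hxI, hfix⟩,
    fun y ⟨hy, hfy⟩ => huniq y ⟨(hpos_iff y hfy).1 hy, hfy⟩⟩

end MasterMap

section RegME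

variable {n : ℕ} {V : Matrix (Fin n) (Fin n) ℝ} {s t : ℝ} {r rt : Fin n → ℝ}

theorem masterMap_fromBlocks_inl (i : Fin n) :
    masterMap (fromBlocks 0 V Vᵀ 0) (fromBlocks Vᵀ 0 0 V) s t (Sum.elim r rt) (Sum.inl i) =
      (t + (V *ᵥ rt) i + s ^ 2 / (t + (Vᵀ *ᵥ r) i))⁻¹ := by
  simp [masterMap, masterDenom, fromBlocks_mulVec]

theorem masterMap_fromBlocks_inr (i : Fin n) :
    masterMap (fromBlocks 0 V Vᵀ 0) (fromBlocks Vᵀ 0 0 V) s t (Sum.elim r rt) (Sum.inr i) =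
      (t + (Vᵀ *ᵥ r) i + s ^ 2 / (t + (V *ᵥ rt) i))⁻¹ := by
  simp [masterMap, masterDenom, fromBlocks_mulVec]

theorem div_add_mul_eq_inv_add_div {F : Type*} [Field F] {b : F} (hb : b ≠ 0) (a c : F) :
    b / (c + a * b) = (a + c / b)⁻¹ := by
  rw [add_div' _ _ _ hb, inv_div, add_comm]

theorem regME_iff_isFixedPt (hV : ∀ i j, 0 ≤ V i j) (ht : 0 < t) :
    RegME V s t r rt ↔ (∀ k, 0 < Sum.elim r rt k) ∧
      IsFixedPt (masterMap (fromBlocks 0 V Vᵀ 0) (fromBlocks Vᵀ 0 0 V) s t) (Sum.elim r rt) := by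
  simp only [RegME, Sum.forall, Sum.elim_inl, Sum.elim_inr, IsFixedPt, funext_iff,
    masterMap_fromBlocks_inl, masterMap_fromBlocks_inr, and_assoc]
  refine and_congr_right fun hr => and_congr_right fun hrt => ?_
  have ha i : 0 < (V *ᵥ rt) i + t := by
    linarith [mulVec_nonneg_of_nonneg hV (fun j => (hrt j).le) i]
  have hb i : 0 < (Vᵀ *ᵥ r) i + t := by
    linarith [mulVec_nonneg_of_nonneg (M := Vᵀ) (fun i j => hV j i) (fun j => (hr j).le) i]
  have hinl i : ((Vᵀ *ᵥ r) i + t) / (s ^ 2 + ((V *ᵥ rt) i + t) * ((Vᵀ *ᵥ r) i + t)) =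
      (t + (V *ᵥ rt) i + s ^ 2 / (t + (Vᵀ *ᵥ r) i))⁻¹ := by
    rw [div_add_mul_eq_inv_add_div (hb i).ne', add_comm t, add_comm t]
  have hinr i : ((V *ᵥ rt) i + t) / (s ^ 2 + ((V *ᵥ rt) i + t) * ((Vᵀ *ᵥ r) i + t)) =
      (t + (Vᵀ *ᵥ r) i + s ^ 2 / (t + (V *ᵥ rt) i))⁻¹ := by
    rw [mul_comm, div_add_mul_eq_inv_add_div (ha i).ne', add_comm t, add_comm t]
  simp only [hinl, hinr, @eq_comm _ (r _), @eq_comm _ (rt _)]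

theorem RegME.sum_eq (ht : t ≠ 0) (h : RegME V s t r rt) : ∑ i, r i = ∑ i, rt i := by
  have key i : r i * ((V *ᵥ rt) i + t) = rt i * ((Vᵀ *ᵥ r) i + t) := by
    rw [h.2.2.1 i, h.2.2.2 i]
    ring
  have hexch : r ⬝ᵥ (V *ᵥ rt) = rt ⬝ᵥ (Vᵀ *ᵥ r) := by
    rw [dotProduct_mulVec, mulVec_transpose, dotProduct_comm]
  have hsum := Fintype.sum_congr _ _ key
  simp only [mul_add, sum_add_distrib, ← sum_mul] at hsum
  simp only [dotProduct] at hexch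
  exact mul_right_cancel₀ ht (by linarith)

end RegME

theorem regularized_master_equations_unique_solution_general
    (n : ℕ) (V : Matrix (Fin n) (Fin n) ℝ)
    (hV : ∀ i j, 0 ≤ V i j) (s t : ℝ) (ht : 0 < t) :
    ∃ r rt : Fin n → ℝ, RegME V s t r rt ∧ (∑ i, r i = ∑ i, rt i) ∧
      ∀ r' rt' : Fin n → ℝ, RegME V s t r' rt' → r' = r ∧ rt' = rt := by
  have hV' : ∀ i j, 0 ≤ Vᵀ i j := fun i j => hV j i
  have h0 : ∀ i j, 0 ≤ (0 : Matrix (Fin n) (Fin n) ℝ) i j := fun _ _ => le_rfl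
  obtain ⟨x, hx, huniq⟩ := existsUnique_isFixedPt_masterMap (s := s)
    (fromBlocks_nonneg h0 hV hV' h0) (fromBlocks_nonneg hV' h0 h0 hV) ht
  rw [← Sum.elim_comp_inl_inr x] at hx
  have hreg := (regME_iff_isFixedPt hV ht).2 hx
  refine ⟨_, _, hreg, hreg.sum_eq ht.ne', fun r' rt' h' => ?_⟩
  obtain rfl := huniq _ ((regME_iff_isFixedPt hV ht).1 h')
  exact ⟨rfl, rfl⟩

/-- For every `n ≥ 1`, nonnegative matrix `V` and `s, t > 0`, the Regularized Master
Equations admit a unique positive solution `(r, r̃)`, and this solution satisfies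
`∑ i, r i = ∑ i, r̃ i`. -/
theorem regularized_master_equations_unique_solution
    (n : ℕ) (hn : 1 ≤ n) (V : Matrix (Fin n) (Fin n) ℝ)
    (hV : ∀ i j, 0 ≤ V i j) (s t : ℝ) (hs : 0 < s) (ht : 0 < t) :
    ∃ r rt : Fin n → ℝ, RegME V s t r rt ∧ (∑ i, r i = ∑ i, rt i) ∧
      ∀ r' rt' : Fin n → ℝ, RegME V s t r' rt' → r' = r ∧ rt' = rt :=
  regularized_master_equations_unique_solution_general n V hV s t ht
end

section
/- Let A be an n×n irreducible matrix with nonnegative entries and set V = (1/n) A⊙A (entrywise square divided by n). If s ≥ √ρ(V), then the only solution of the Master Equations with nonnegative entries is the trivial solution q = q̃ = 0. -/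
open Matrix Finset

/-- Spectral radius of a real square matrix: the supremum of the moduli of its
complex eigenvalues. -/
noncomputable def specRad {n : ℕ} (V : Matrix (Fin n) (Fin n) ℝ) : ℝ :=
  sSup {r : ℝ | ∃ μ : ℂ, r = ‖μ‖ ∧
    Module.End.HasEigenvalue (Matrix.toLin' (V.map (fun x : ℝ => (x : ℂ)))) μ}

/-- A nonnegative matrix `A` is irreducible if for every pair `(i,j)` some power
`A^k`, `k ≥ 1`, has a positive `(i,j)` entry. -/
def Irred {n : ℕ} (A : Matrix (Fin n) (Fin n) ℝ) : Prop :=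
  ∀ i j, ∃ k : ℕ, 1 ≤ k ∧ 0 < (A ^ k) i j

/-- The Master Equations associated with a nonnegative `n × n` matrix `V` and a
parameter `s`: the unknowns `q, q̃ ∈ ℝⁿ` have nonnegative entries and satisfy
`q_i = (Vᵀ q)_i / (s² + (V q̃)_i (Vᵀ q)_i)`,
`q̃_i = (V q̃)_i / (s² + (V q̃)_i (Vᵀ q)_i)` and `∑ q_i = ∑ q̃_i`. -/
def MasterEq {n : ℕ} (V : Matrix (Fin n) (Fin n) ℝ) (s : ℝ)
    (q qt : Fin n → ℝ) : Prop :=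
  (∀ i, 0 ≤ q i) ∧ (∀ i, 0 ≤ qt i) ∧
  (∀ i, q i = (Vᵀ.mulVec q) i /
      (s ^ 2 + (V.mulVec qt) i * (Vᵀ.mulVec q) i)) ∧
  (∀ i, qt i = (V.mulVec qt) i /
      (s ^ 2 + (V.mulVec qt) i * (Vᵀ.mulVec q) i)) ∧
  (∑ i, q i = ∑ i, qt i)

/-! If `q ≠ 0`, then `q̃ ≠ 0` as well since the sums agree. Irreducibility of `V`, inherited from
`A`, propagates positivity along the edges of `V` through both equations, so `q`, `q̃` and the
products `(V q̃)ᵢ (Vᵀ q)ᵢ` are all positive. If `ε` is the least of these products, the equation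
for `q̃` gives `(s² + ε) q̃ ≤ V q̃`, and the Collatz–Wielandt bound, obtained from Gelfand's
formula, yields `ρ(V) ≥ s² + ε > s² ≥ ρ(V)`. The denominators are positive because `s > 0`,
which holds since `ρ(V) > 0`: every row of an irreducible matrix has a positive entry. -/

open Filter Topology

attribute [local instance] Matrix.linftyOpNormedRing Matrix.linftyOpNormedAlgebra

theorem spectrum.ofReal_le_spectralRadius_of_mul_pow_le_norm_pow
    {A : Type*} [NormedRing A] [NormedAlgebra ℂ A] [CompleteSpace A] (a : A) {c t : ℝ}
    (hc : 0 < c) (ht : 0 ≤ t) (h : ∀ k : ℕ, c * t ^ k ≤ ‖a ^ k‖) :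
    ENNReal.ofReal t ≤ spectralRadius ℂ a := by
  have hroot : Tendsto (fun k : ℕ => c ^ (1 / k : ℝ)) atTop (𝓝 1) := by
    simpa [Function.comp_def] using (Real.continuousAt_const_rpow hc.ne').tendsto.comp
      tendsto_one_div_atTop_nhds_zero_nat
  have hlim : Tendsto (fun k : ℕ => ENNReal.ofReal (c ^ (1 / k : ℝ) * t)) atTop
      (𝓝 (ENNReal.ofReal t)) := by
    simpa [Function.comp_def] using (ENNReal.continuous_ofReal.tendsto _).comp (hroot.mul_const t)
  refine le_of_tendsto_of_tendsto hlim (pow_norm_pow_one_div_tendsto_nhds_spectralRadius a) ?_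
  filter_upwards [eventually_ne_atTop 0] with k hk
  refine ENNReal.ofReal_le_ofReal ?_
  calc c ^ (1 / k : ℝ) * t = (c * t ^ k) ^ (1 / k : ℝ) := by
        rw [Real.mul_rpow hc.le (by positivity), one_div, Real.pow_rpow_inv_natCast ht hk]
    _ ≤ ‖a ^ k‖ ^ (1 / k : ℝ) := Real.rpow_le_rpow (by positivity) (h k) (by positivity)

theorem Matrix.linfty_opNorm_map_ofReal {ι : Type*} [Fintype ι] [DecidableEq ι]
    (M : Matrix ι ι ℝ) : ‖M.map ((↑) : ℝ → ℂ)‖ = ‖M‖ := by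
  simp [Matrix.linfty_opNorm_def, Complex.nnnorm_real]

theorem Matrix.hasEigenvalue_toLin'_iff_mem_spectrum {ι : Type*} [Fintype ι] [DecidableEq ι]
    {K : Type*} [Field K] (W : Matrix ι ι K) (μ : K) :
    Module.End.HasEigenvalue W.toLin' μ ↔ μ ∈ spectrum K W := by
  rw [Module.End.hasEigenvalue_iff_mem_spectrum, Matrix.spectrum_toLin']

theorem spectralRadius_map_ofReal_le_specRad {n : ℕ} (M : Matrix (Fin n) (Fin n) ℝ) :
    spectralRadius ℂ (M.map ((↑) : ℝ → ℂ)) ≤ ENNReal.ofReal (specRad M) := by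
  set W := M.map ((↑) : ℝ → ℂ)
  have hset : {r : ℝ | ∃ μ : ℂ, r = ‖μ‖ ∧ Module.End.HasEigenvalue W.toLin' μ} =
      norm '' spectrum ℂ W := by
    ext r
    simp only [Matrix.hasEigenvalue_toLin'_iff_mem_spectrum, Set.mem_ofPred_eq, Set.mem_image]
    exact ⟨fun ⟨μ, hr, hμ⟩ => ⟨μ, hμ, hr.symm⟩, fun ⟨μ, hμ, hr⟩ => ⟨μ, hr.symm, hμ⟩⟩
  have hbdd : BddAbove (norm '' spectrum ℂ W) := ((Matrix.finite_spectrum W).image _).bddAbove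
  refine iSup₂_le fun μ hμ => ?_
  rw [← enorm_eq_nnnorm, ← ofReal_norm, specRad, hset]
  exact ENNReal.ofReal_le_ofReal (le_csSup hbdd ⟨μ, hμ, rfl⟩)

namespace Matrix

variable {ι R : Type*} [Fintype ι] [CommRing R] [LinearOrder R] [IsStrictOrderedRing R]
  {M N : Matrix ι ι R}

theorem mul_apply_pos_iff (hM : ∀ i j, 0 ≤ M i j) (hN : ∀ i j, 0 ≤ N i j) {i j : ι} :
    0 < (M * N) i j ↔ ∃ m, 0 < M i m ∧ 0 < N m j := by
  rw [mul_apply, sum_pos_iff_of_nonneg fun m _ => mul_nonneg (hM i m) (hN m j)]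
  exact exists_congr fun m => ⟨fun ⟨_, h⟩ => ⟨pos_of_mul_pos_left h (hN m j),
    pos_of_mul_pos_right h (hM i m)⟩, fun ⟨h₁, h₂⟩ => ⟨mem_univ m, mul_pos h₁ h₂⟩⟩

theorem mulVec_mono (hM : ∀ i j, 0 ≤ M i j) {x y : ι → R} (hxy : x ≤ y) : M *ᵥ x ≤ M *ᵥ y :=
  fun i => sum_le_sum fun m _ => mul_le_mul_of_nonneg_left (hxy m) (hM i m)

theorem mulVec_nonneg (hM : ∀ i j, 0 ≤ M i j) {x : ι → R} (hx : 0 ≤ x) : 0 ≤ M *ᵥ x := by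
  simpa using mulVec_mono hM hx

theorem mulVec_apply_pos (hM : ∀ i j, 0 ≤ M i j) {x : ι → R} (hx : 0 ≤ x) {i m : ι}
    (him : 0 < M i m) (hxm : 0 < x m) : 0 < (M *ᵥ x) i :=
  (sum_pos_iff_of_nonneg fun l _ => mul_nonneg (hM i l) (hx l)).2
    ⟨m, mem_univ m, mul_pos him hxm⟩

variable [DecidableEq ι]

theorem pow_apply_pos_of_forall_pos_imp (hM : ∀ i j, 0 ≤ M i j) (hN : ∀ i j, 0 ≤ N i j)
    (hMN : ∀ i j, 0 < M i j → 0 < N i j) (k : ℕ) {i j : ι} (h : 0 < (M ^ k) i j) :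
    0 < (N ^ k) i j := by
  induction k generalizing j with
  | zero => simpa using h
  | succ k ih =>
    rw [pow_succ, mul_apply_pos_iff (pow_apply_nonneg hM k) hM] at h
    rw [pow_succ, mul_apply_pos_iff (pow_apply_nonneg hN k) hN]
    obtain ⟨m, hk, hm⟩ := h
    exact ⟨m, ih hk, hMN m j hm⟩

theorem pow_smul_le_pow_mulVec (hM : ∀ i j, 0 ≤ M i j) {t : R} (ht : 0 ≤ t) {u : ι → R}
    (h : t • u ≤ M *ᵥ u) (k : ℕ) : t ^ k • u ≤ (M ^ k) *ᵥ u := by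
  induction k with
  | zero => simp
  | succ k ih =>
    calc t ^ (k + 1) • u = t • (t ^ k • u) := by rw [pow_succ', mul_smul]
      _ ≤ t • ((M ^ k) *ᵥ u) := smul_le_smul_of_nonneg_left ih ht
      _ = (M ^ k) *ᵥ (t • u) := (mulVec_smul _ _ _).symm
      _ ≤ (M ^ k) *ᵥ (M *ᵥ u) := mulVec_mono (pow_apply_nonneg hM k) h
      _ = (M ^ (k + 1)) *ᵥ u := by rw [pow_succ, mulVec_mulVec]

end Matrix

theorem specRad_nonneg {n : ℕ} (M : Matrix (Fin n) (Fin n) ℝ) : 0 ≤ specRad M :=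
  Real.sSup_nonneg fun _ ⟨μ, hr, _⟩ => hr ▸ norm_nonneg μ

theorem le_specRad_of_smul_le_mulVec {n : ℕ} {M : Matrix (Fin n) (Fin n) ℝ}
    (hM : ∀ i j, 0 ≤ M i j) {t : ℝ} (ht : 0 ≤ t) {u : Fin n → ℝ} {j : Fin n} (hu : 0 < u j)
    (h : t • u ≤ M *ᵥ u) : t ≤ specRad M := by
  have hnorm : 0 < ‖u‖ := hu.trans_le ((Real.le_norm_self _).trans (norm_le_pi_norm u j))
  have hbound : ∀ k : ℕ, u j / ‖u‖ * t ^ k ≤ ‖M.map ((↑) : ℝ → ℂ) ^ k‖ := by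
    intro k
    rw [show M.map ((↑) : ℝ → ℂ) ^ k = (M ^ k).map (↑) from (M.map_pow Complex.ofRealHom k).symm,
      Matrix.linfty_opNorm_map_ofReal,
      div_mul_eq_mul_div, div_le_iff₀ hnorm]
    calc u j * t ^ k = (t ^ k • u) j := mul_comm _ _
      _ ≤ (M ^ k *ᵥ u) j := Matrix.pow_smul_le_pow_mulVec hM ht h k j
      _ ≤ ‖M ^ k *ᵥ u‖ := (Real.le_norm_self _).trans (norm_le_pi_norm _ j)
      _ ≤ ‖M ^ k‖ * ‖u‖ := Matrix.linfty_opNorm_mulVec _ _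
  have := (spectrum.ofReal_le_spectralRadius_of_mul_pow_le_norm_pow _ (div_pos hu hnorm) ht
    hbound).trans (spectralRadius_map_ofReal_le_specRad M)
  exact (ENNReal.ofReal_le_ofReal_iff (specRad_nonneg M)).1 this

theorem irred_iff_isIrreducible {n : ℕ} {A : Matrix (Fin n) (Fin n) ℝ} (hA : ∀ i j, 0 ≤ A i j) :
    Irred A ↔ A.IsIrreducible := by
  rw [Matrix.isIrreducible_iff_exists_pow_pos hA]
  rfl

namespace Matrix.IsIrreducible

variable {ι R : Type*} [CommRing R] [LinearOrder R] {A B : Matrix ι ι R}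

theorem forall_pos_of_pos (hA : A.IsIrreducible) {x : ι → R}
    (hclosed : ∀ i j, 0 < A i j → 0 < x i → 0 < x j) {j : ι} (hj : 0 < x j) (i : ι) :
    0 < x i := by
  let := toQuiver A
  obtain ⟨p, -⟩ := hA.connected j i
  induction p with
  | nil => exact hj
  | cons _ e ih => exact hclosed _ _ e.down ih

variable [Fintype ι] [DecidableEq ι] [IsStrictOrderedRing R]

theorem of_forall_pos_imp (hA : A.IsIrreducible) (hB : ∀ i j, 0 ≤ B i j)
    (hAB : ∀ i j, 0 < A i j → 0 < B i j) : B.IsIrreducible := by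
  rw [isIrreducible_iff_exists_pow_pos hB]
  intro i j
  obtain ⟨k, hk, hkij⟩ := (isIrreducible_iff_exists_pow_pos hA.nonneg).1 hA i j
  exact ⟨k, hk, pow_apply_pos_of_forall_pos_imp hA.nonneg hB hAB k hkij⟩

theorem smul_hadamard_self (hA : A.IsIrreducible) {c : R} (hc : 0 < c) :
    (c • hadamard A A).IsIrreducible :=
  hA.of_forall_pos_imp (fun _ _ => mul_nonneg hc.le (mul_self_nonneg _))
    fun _ _ hij => mul_pos hc (mul_pos hij hij)

-- Unlike `IsIrreducible.exists_pos`, this does not need `Nontrivial ι`.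
theorem exists_apply_pos (hA : A.IsIrreducible) (i : ι) : ∃ j, 0 < A i j := by
  obtain ⟨k, hk, hkii⟩ := (isIrreducible_iff_exists_pow_pos hA.nonneg).1 hA i i
  obtain ⟨k, rfl⟩ := Nat.exists_eq_add_of_lt hk
  rw [zero_add, pow_succ', mul_apply_pos_iff hA.nonneg (pow_apply_nonneg hA.nonneg k)] at hkii
  obtain ⟨j, hij, -⟩ := hkii
  exact ⟨j, hij⟩

end Matrix.IsIrreducible

theorem Matrix.IsIrreducible.specRad_pos {n : ℕ} [Nonempty (Fin n)]
    {A : Matrix (Fin n) (Fin n) ℝ} (hA : A.IsIrreducible) : 0 < specRad A := by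
  obtain ⟨i₀, hi₀⟩ := Finite.exists_min fun i => ∑ j, A i j
  obtain ⟨j, hj⟩ := hA.exists_apply_pos i₀
  have ht : 0 < ∑ j, A i₀ j := sum_pos' (fun j _ => hA.nonneg i₀ j) ⟨j, mem_univ j, hj⟩
  refine ht.trans_le (le_specRad_of_smul_le_mulVec hA.nonneg ht.le (u := 1) (j := i₀) one_pos
    fun i => ?_)
  simpa [mulVec, dotProduct] using hi₀ i

namespace MasterEq

variable {n : ℕ} {V : Matrix (Fin n) (Fin n) ℝ} {s : ℝ} {q qt : Fin n → ℝ}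

theorem transpose (h : MasterEq V s q qt) : MasterEq Vᵀ s qt q := by
  obtain ⟨hq, hqt, hq_eq, hqt_eq, hsum⟩ := h
  refine ⟨hqt, hq, fun i => ?_, fun i => ?_, hsum.symm⟩ <;>
    rw [transpose_transpose, mul_comm ((Vᵀ *ᵥ q) i)]
  exacts [hqt_eq i, hq_eq i]

theorem qt_ne_zero (h : MasterEq V s q qt) (hq : q ≠ 0) : qt ≠ 0 := by
  intro hqt
  apply hq
  rw [← Fintype.sum_eq_zero_iff_of_nonneg h.1, h.2.2.2.2, hqt]
  simp

theorem denom_pos (hV : ∀ i j, 0 ≤ V i j) (hs : s ≠ 0) (h : MasterEq V s q qt) (i : Fin n) :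
    0 < s ^ 2 + (V *ᵥ qt) i * (Vᵀ *ᵥ q) i := by
  have hb := mulVec_nonneg hV h.2.1 i
  have ha := mulVec_nonneg (fun i j => hV j i) h.1 i
  exact add_pos_of_pos_of_nonneg (by positivity) (mul_nonneg hb ha)

theorem pos_iff (hV : ∀ i j, 0 ≤ V i j) (hs : s ≠ 0) (h : MasterEq V s q qt) (i : Fin n) :
    0 < q i ↔ 0 < (Vᵀ *ᵥ q) i := by
  rw [h.2.2.1 i]
  exact div_pos_iff_of_pos_right (h.denom_pos hV hs i)

theorem pos_of_ne_zero (hV : V.IsIrreducible) (hs : s ≠ 0) (h : MasterEq V s q qt)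
    (hq : q ≠ 0) (i : Fin n) : 0 < q i := by
  obtain ⟨j, hj⟩ := Function.ne_iff.1 hq
  refine hV.forall_pos_of_pos (fun m l hml hm => ?_) ((h.1 j).lt_of_ne' hj) i
  exact (h.pos_iff hV.nonneg hs l).2
    (mulVec_apply_pos (fun i j => hV.nonneg j i) h.1 (hml : 0 < Vᵀ l m) hm)

theorem sq_lt_specRad (hV : V.IsIrreducible) (hs : s ≠ 0) (h : MasterEq V s q qt)
    (hq : q ≠ 0) : s ^ 2 < specRad V := by
  have hqt := h.qt_ne_zero hq
  obtain ⟨j, -⟩ := Function.ne_iff.1 hq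
  have : Nonempty (Fin n) := ⟨j⟩
  obtain ⟨i₀, hi₀⟩ := Finite.exists_min fun i => (V *ᵥ qt) i * (Vᵀ *ᵥ q) i
  have hε : 0 < (V *ᵥ qt) i₀ * (Vᵀ *ᵥ q) i₀ := by
    refine mul_pos ?_ ((h.pos_iff hV.nonneg hs i₀).1 (h.pos_of_ne_zero hV hs hq i₀))
    simpa using (h.transpose.pos_iff hV.transpose.nonneg hs i₀).1
      (h.transpose.pos_of_ne_zero hV.transpose hs hqt i₀)
  have hsub : (s ^ 2 + (V *ᵥ qt) i₀ * (Vᵀ *ᵥ q) i₀) • qt ≤ V *ᵥ qt := fun i => by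
    calc (s ^ 2 + (V *ᵥ qt) i₀ * (Vᵀ *ᵥ q) i₀) * qt i
        ≤ (s ^ 2 + (V *ᵥ qt) i * (Vᵀ *ᵥ q) i) * qt i :=
          mul_le_mul_of_nonneg_right (add_le_add_right (hi₀ i) _) (h.2.1 i)
      _ = (V *ᵥ qt) i := by
        rw [h.2.2.2.1 i, mul_div_cancel₀ _ (h.denom_pos hV.nonneg hs i).ne']
  have := le_specRad_of_smul_le_mulVec hV.nonneg (by positivity)
    (h.transpose.pos_of_ne_zero hV.transpose hs hqt i₀) hsub
  linarith

end MasterEq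

theorem master_equations_trivial_above_spectral_radius_general
    (n : ℕ) (A : Matrix (Fin n) (Fin n) ℝ)
    (hA : ∀ i j, 0 ≤ A i j) (hirr : Irred A)
    (V : Matrix (Fin n) (Fin n) ℝ)
    (hV : V = (n : ℝ)⁻¹ • (Matrix.hadamard A A))
    (s : ℝ) (hs : Real.sqrt (specRad V) ≤ s)
    (q qt : Fin n → ℝ) (h : MasterEq V s q qt) :
    q = 0 ∧ qt = 0 := by
  suffices hq : q = 0 from ⟨hq, not_not.1 fun hqt => h.transpose.qt_ne_zero hqt hq⟩
  by_contra hq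
  obtain ⟨j, -⟩ := Function.ne_iff.1 hq
  have : Nonempty (Fin n) := ⟨j⟩
  have hVirr : V.IsIrreducible := hV ▸ ((irred_iff_isIrreducible hA).1 hirr).smul_hadamard_self
    (inv_pos.2 (Nat.cast_pos.2 j.pos))
  have hs0 : 0 < s := (Real.sqrt_pos.2 hVirr.specRad_pos).trans_le hs
  exact (h.sq_lt_specRad hVirr hs0.ne' hq).not_ge (Real.sqrt_le_iff.1 hs).2

/-- If `A` is irreducible nonnegative, `V = (1/n) A⊙A`, and `s ≥ √ρ(V)`, then the
only nonnegative solution of the Master Equations is the trivial one. -/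
theorem master_equations_trivial_above_spectral_radius
    (n : ℕ) (hn : 1 ≤ n) (A : Matrix (Fin n) (Fin n) ℝ)
    (hA : ∀ i j, 0 ≤ A i j) (hirr : Irred A)
    (V : Matrix (Fin n) (Fin n) ℝ)
    (hV : V = (n : ℝ)⁻¹ • (Matrix.hadamard A A))
    (s : ℝ) (hs : Real.sqrt (specRad V) ≤ s)
    (q qt : Fin n → ℝ) (h : MasterEq V s q qt) :
    q = 0 ∧ qt = 0 :=
  master_equations_trivial_above_spectral_radius_general n A hA hirr V hV s hs q qt h
end

section
/- Let k ≥ 2, m ≥ 1, n = km, and let J_m denote the m×m all-ones matrix. Let A_n be the n×n block matrix whose (1,j) block is J_m for j = 2,…,k, whose (i,1) block is J_m for i = 2,…,k, and all of whose other m×m blocks are zero. Set V_n = (1/n) A_n⊙A_n. Then: (a) ρ(V_n) = √(k−1)/k; and (b) for every s ∈ (0, ρ*) with ρ* = (k−1)^{1/4}/√k, the unique nontrivial nonnegative solution (q(s), q̃(s)) of the Master Equations associated with V_n satisfies 1 − (1/n)⟨q(s), V_n q̃(s)⟩ = (1/k)√((k−2)² + 4k²s⁴). -/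
open Matrix Finset

/-!
`V` is `c = 1/n` times the adjacency matrix of the complete bipartite graph between the first
block `T` (`m` indices) and its complement (`(k-1)m` indices). The vector that is constant on
each side, with values `√(c|Tᶜ|)` and `√(c|T|)`, is an eigenvector for `√(c|T| · c|Tᶜ|)`, and
Gershgorin's theorem applied to `V²`, all of whose row sums equal `c|T| · c|Tᶜ|`, shows that no
eigenvalue is larger.

A solution of the Master Equations is constant on each side as well, so with `a`, `b` the scaled
masses of `q` on the two sides the system collapses to `a(s² + b²) = p b`, `b(s² + a²) = p' a`
with `p = c|T| = 1/k`, `p' = c|Tᶜ| = (k-1)/k`. These force `(p - ab)(p' - ab) = s⁴` with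
`ab < p, p'`, so `2ab` is the smaller root `p + p' - √((p - p')² + 4s⁴)`, and `p + p' = 1`.
-/

lemma exists_norm_le_sum_norm_of_hasEigenvalue {ι K : Type*} [NormedField K] [Fintype ι]
    [DecidableEq ι] {M : Matrix ι ι K} {μ : K} (hμ : Module.End.HasEigenvalue (toLin' M) μ) :
    ∃ i, ‖μ‖ ≤ ∑ j, ‖M i j‖ := by
  obtain ⟨i, hi⟩ := eigenvalue_mem_ball hμ
  refine ⟨i, ?_⟩
  rw [← Finset.add_sum_erase _ _ (mem_univ i)]
  calc ‖μ‖ ≤ ‖M i i‖ + ‖μ - M i i‖ := norm_le_norm_add_norm_sub' μ (M i i)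
    _ ≤ _ := by gcongr; rwa [← dist_eq_norm, ← Metric.mem_closedBall]

lemma norm_sq_le_of_hasEigenvalue_map_ofReal {ι : Type*} [Fintype ι] [DecidableEq ι]
    {V : Matrix ι ι ℝ} (hV : ∀ i j, 0 ≤ V i j) {C : ℝ} (hC : ∀ i, ∑ j, (V * V) i j ≤ C)
    {μ : ℂ} (hμ : Module.End.HasEigenvalue (toLin' (V.map ((↑) : ℝ → ℂ))) μ) : ‖μ‖ ^ 2 ≤ C := by
  have hμ2 : Module.End.HasEigenvalue (toLin' ((V * V).map ((↑) : ℝ → ℂ))) (μ ^ 2) := by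
    rw [show (V * V).map ((↑) : ℝ → ℂ) = V.map (↑) * V.map (↑) from
      Matrix.map_mul (f := Complex.ofRealHom), ← sq, toLin'_pow]
    exact hμ.pow 2
  obtain ⟨i, hi⟩ := exists_norm_le_sum_norm_of_hasEigenvalue hμ2
  have hVV : ∀ j, 0 ≤ (V * V) i j := fun j => sum_nonneg fun l _ => mul_nonneg (hV i l) (hV l j)
  calc ‖μ‖ ^ 2 = ‖μ ^ 2‖ := (norm_pow μ 2).symm
    _ ≤ ∑ j, (V * V) i j := by
        simpa only [map_apply, Complex.norm_real, Real.norm_of_nonneg (hVV _)] using hi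
    _ ≤ C := hC i

lemma hasEigenvalue_map_ofReal_of_mulVec_eq_smul {ι : Type*} [Fintype ι] [DecidableEq ι]
    {V : Matrix ι ι ℝ} {w : ι → ℝ} (hw : w ≠ 0) {r : ℝ} (h : V *ᵥ w = r • w) :
    Module.End.HasEigenvalue (toLin' (V.map ((↑) : ℝ → ℂ))) r := by
  refine Module.End.hasEigenvalue_of_hasEigenvector (x := fun i => (w i : ℂ)) ⟨?_, ?_⟩
  · rw [Module.End.mem_eigenspace_iff, toLin'_apply]
    ext i
    exact (Complex.ofRealHom.map_mulVec V w i).symm.trans (by simp [h])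
  · contrapose! hw
    ext i
    simpa using congrFun hw i

lemma specRad_eq_of_hasEigenvalue {n : ℕ} {V : Matrix (Fin n) (Fin n) ℝ} {r : ℝ}
    (hr : Module.End.HasEigenvalue (toLin' (V.map ((↑) : ℝ → ℂ))) r)
    (hle : ∀ μ, Module.End.HasEigenvalue (toLin' (V.map ((↑) : ℝ → ℂ))) μ → ‖μ‖ ≤ r) :
    specRad V = r := by
  have hr0 : 0 ≤ r := (norm_nonneg _).trans (hle _ hr)
  refine IsGreatest.csSup_eq ⟨⟨r, ?_, hr⟩, ?_⟩
  · rw [Complex.norm_real, Real.norm_of_nonneg hr0]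
  · rintro _ ⟨μ, rfl, hμ⟩
    exact hle μ hμ

section BipartiteProfile

variable {ι : Type*} [DecidableEq ι] {T : Finset ι} {c : ℝ}

def bipartiteProfile (T : Finset ι) (c : ℝ) : Matrix ι ι ℝ :=
  Matrix.of fun i j => if (i ∈ T ↔ j ∈ T) then 0 else c

@[simp]
lemma bipartiteProfile_apply (i j : ι) :
    bipartiteProfile T c i j = if (i ∈ T ↔ j ∈ T) then 0 else c :=
  rfl

lemma bipartiteProfile_transpose : (bipartiteProfile T c)ᵀ = bipartiteProfile T c := by
  ext i j
  simp only [transpose_apply, bipartiteProfile_apply, Iff.comm]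

lemma bipartiteProfile_nonneg (hc : 0 ≤ c) (i j : ι) : 0 ≤ bipartiteProfile T c i j := by
  rw [bipartiteProfile_apply]
  split_ifs <;> simp [hc]

lemma bipartiteProfile_mulVec_of_mem [Fintype ι] {i : ι} (hi : i ∈ T) (w : ι → ℝ) :
    (bipartiteProfile T c *ᵥ w) i = c * ∑ j ∈ Tᶜ, w j := by
  rw [mulVec, dotProduct, ← sum_compl_add_sum T, sum_eq_zero (s := T) fun j hj => by simp [hi, hj],
    add_zero, mul_sum]
  exact sum_congr rfl fun j hj => by simp [hi, mem_compl.1 hj]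

lemma bipartiteProfile_mulVec_of_notMem [Fintype ι] {i : ι} (hi : i ∉ T) (w : ι → ℝ) :
    (bipartiteProfile T c *ᵥ w) i = c * ∑ j ∈ T, w j := by
  rw [mulVec, dotProduct, ← sum_compl_add_sum T,
    sum_eq_zero (s := Tᶜ) fun j hj => by simp [hi, mem_compl.1 hj], zero_add, mul_sum]
  exact sum_congr rfl fun j hj => by simp [hi, hj]

lemma sum_mul_bipartiteProfile_mulVec [Fintype ι] (v w : ι → ℝ) :
    ∑ i, v i * (bipartiteProfile T c *ᵥ w) i =
      (∑ i ∈ T, v i) * (c * ∑ j ∈ Tᶜ, w j) + (∑ i ∈ Tᶜ, v i) * (c * ∑ j ∈ T, w j) := by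
  rw [← sum_add_sum_compl T, sum_mul, sum_mul]
  congr 1 <;> refine sum_congr rfl fun i hi => ?_
  · rw [bipartiteProfile_mulVec_of_mem hi]
  · rw [bipartiteProfile_mulVec_of_notMem (mem_compl.1 hi)]

lemma sum_bipartiteProfile_mul_self_apply [Fintype ι] (i : ι) :
    ∑ j, (bipartiteProfile T c * bipartiteProfile T c) i j = (c * #T) * (c * #Tᶜ) := by
  have hrow : ∀ l, ∑ j, bipartiteProfile T c l j = if l ∈ T then c * #Tᶜ else c * #T := by
    intro l
    split_ifs with hl
    · simpa [mulVec, dotProduct] using bipartiteProfile_mulVec_of_mem hl (c := c) fun _ => 1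
    · simpa [mulVec, dotProduct] using bipartiteProfile_mulVec_of_notMem hl (c := c) fun _ => 1
  have hsum : ∑ j, (bipartiteProfile T c * bipartiteProfile T c) i j =
      (bipartiteProfile T c *ᵥ fun l => if l ∈ T then c * #Tᶜ else c * #T) i := by
    simp only [mul_apply, mulVec, dotProduct, ← hrow, mul_sum]
    exact sum_comm
  rw [hsum]
  by_cases hi : i ∈ T
  · rw [bipartiteProfile_mulVec_of_mem hi,
      sum_congr rfl fun l hl => if_neg (mem_compl.1 hl), sum_const, nsmul_eq_mul]
    ring
  · rw [bipartiteProfile_mulVec_of_notMem hi, sum_congr rfl fun l hl => if_pos hl, sum_const,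
      nsmul_eq_mul]
    ring

lemma bipartiteProfile_mulVec_eigenvector [Fintype ι] (hc : 0 ≤ c) :
    (bipartiteProfile T c *ᵥ fun i => if i ∈ T then √(c * #Tᶜ) else √(c * #T)) =
      √((c * #T) * (c * #Tᶜ)) • fun i => if i ∈ T then √(c * #Tᶜ) else √(c * #T) := by
  have hT : 0 ≤ c * #T := by positivity
  have hTc : 0 ≤ c * #Tᶜ := by positivity
  ext i
  rw [Pi.smul_apply, smul_eq_mul, Real.sqrt_mul hT]
  by_cases hi : i ∈ T
  · rw [bipartiteProfile_mulVec_of_mem hi, sum_congr rfl fun l hl => if_neg (mem_compl.1 hl),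
      sum_const, nsmul_eq_mul, if_pos hi]
    linear_combination -√(c * #T) * Real.mul_self_sqrt hTc
  · rw [bipartiteProfile_mulVec_of_notMem hi, sum_congr rfl fun l hl => if_pos hl, sum_const,
      nsmul_eq_mul, if_neg hi]
    linear_combination -√(c * #Tᶜ) * Real.mul_self_sqrt hT

end BipartiteProfile

lemma specRad_bipartiteProfile {n : ℕ} {T : Finset (Fin n)} {c : ℝ} (hp : 0 < c * #T)
    (hp' : 0 < c * #Tᶜ) :
    specRad (bipartiteProfile T c) = √((c * #T) * (c * #Tᶜ)) := by
  have hc : 0 < c := pos_of_mul_pos_left hp (Nat.cast_nonneg _)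
  refine specRad_eq_of_hasEigenvalue (hasEigenvalue_map_ofReal_of_mulVec_eq_smul ?_
    (bipartiteProfile_mulVec_eigenvector hc.le)) fun μ hμ => ?_
  · obtain ⟨j, hj⟩ := card_pos.1 (Nat.cast_pos.1 (pos_of_mul_pos_right hp' hc.le))
    refine Function.ne_iff.2 ⟨j, ?_⟩
    rw [if_neg (mem_compl.1 hj)]
    exact (Real.sqrt_pos.2 hp).ne'
  · simpa using Real.abs_le_sqrt (norm_sq_le_of_hasEigenvalue_map_ofReal
      (bipartiteProfile_nonneg hc.le) (fun i => (sum_bipartiteProfile_mul_self_apply i).le) hμ)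

lemma MasterEq.mul_denom_eq {n : ℕ} {V : Matrix (Fin n) (Fin n) ℝ} {s : ℝ}
    {q qt : Fin n → ℝ} (h : MasterEq V s q qt) (hV : ∀ i j, 0 ≤ V i j) (hs : s ≠ 0)
    (i : Fin n) :
    q i * (s ^ 2 + (V *ᵥ qt) i * (Vᵀ *ᵥ q) i) = (Vᵀ *ᵥ q) i ∧
      qt i * (s ^ 2 + (V *ᵥ qt) i * (Vᵀ *ᵥ q) i) = (V *ᵥ qt) i := by
  obtain ⟨hq, hqt, hq_eq, hqt_eq, -⟩ := h
  have hVqt : 0 ≤ (V *ᵥ qt) i := dotProduct_nonneg_of_nonneg (hV i) hqt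
  have hVq : 0 ≤ (Vᵀ *ᵥ q) i := dotProduct_nonneg_of_nonneg (fun j => hV j i) hq
  have hden : s ^ 2 + (V *ᵥ qt) i * (Vᵀ *ᵥ q) i ≠ 0 := by positivity
  exact ⟨(eq_div_iff hden).1 (hq_eq i), (eq_div_iff hden).1 (hqt_eq i)⟩

lemma MasterEq.sum_pos {n : ℕ} {V : Matrix (Fin n) (Fin n) ℝ} {s : ℝ} {q qt : Fin n → ℝ}
    (h : MasterEq V s q qt) (hne : (q, qt) ≠ (0, 0)) : 0 < ∑ i, q i := by
  obtain ⟨hq, hqt, -, -, hsum⟩ := h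
  by_cases hq0 : q = 0
  · rw [hsum]
    exact Fintype.sum_pos (lt_of_le_of_ne hqt fun h => hne (by rw [hq0, ← h]))
  · exact Fintype.sum_pos (lt_of_le_of_ne hq (Ne.symm hq0))

section BipartiteMasterEq

variable {n : ℕ} {T : Finset (Fin n)} {c s : ℝ} {q qt : Fin n → ℝ}

lemma MasterEq.bipartiteProfile_sum_mem (h : MasterEq (bipartiteProfile T c) s q qt)
    (hc : 0 ≤ c) (hs : s ≠ 0) :
    (∑ i ∈ T, q i) * (s ^ 2 + (c * ∑ j ∈ Tᶜ, qt j) * (c * ∑ j ∈ Tᶜ, q j)) =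
        #T * (c * ∑ j ∈ Tᶜ, q j) ∧
      (∑ i ∈ T, qt i) * (s ^ 2 + (c * ∑ j ∈ Tᶜ, qt j) * (c * ∑ j ∈ Tᶜ, q j)) =
        #T * (c * ∑ j ∈ Tᶜ, qt j) := by
  have hi : ∀ i ∈ T, _ := fun i hi => by
    simpa only [bipartiteProfile_transpose, bipartiteProfile_mulVec_of_mem hi]
      using h.mul_denom_eq (bipartiteProfile_nonneg hc) hs i
  simp only [sum_mul, ← nsmul_eq_mul]
  exact ⟨sum_eq_card_nsmul fun i hi' => (hi i hi').1, sum_eq_card_nsmul fun i hi' => (hi i hi').2⟩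

lemma MasterEq.bipartiteProfile_sum_compl (h : MasterEq (bipartiteProfile T c) s q qt)
    (hc : 0 ≤ c) (hs : s ≠ 0) :
    (∑ i ∈ Tᶜ, q i) * (s ^ 2 + (c * ∑ j ∈ T, qt j) * (c * ∑ j ∈ T, q j)) =
        #Tᶜ * (c * ∑ j ∈ T, q j) ∧
      (∑ i ∈ Tᶜ, qt i) * (s ^ 2 + (c * ∑ j ∈ T, qt j) * (c * ∑ j ∈ T, q j)) =
        #Tᶜ * (c * ∑ j ∈ T, qt j) := by
  have hi : ∀ i ∈ Tᶜ, _ := fun i hi => by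
    simpa only [bipartiteProfile_transpose, bipartiteProfile_mulVec_of_notMem (mem_compl.1 hi)]
      using h.mul_denom_eq (bipartiteProfile_nonneg hc) hs i
  simp only [sum_mul, ← nsmul_eq_mul]
  exact ⟨sum_eq_card_nsmul fun i hi' => (hi i hi').1, sum_eq_card_nsmul fun i hi' => (hi i hi').2⟩

lemma MasterEq.bipartiteProfile_block_sums (h : MasterEq (bipartiteProfile T c) s q qt)
    (hc : 0 ≤ c) (hs : s ≠ 0) :
    ∃ a b : ℝ, 0 ≤ a ∧ 0 ≤ b ∧ a + b = c * ∑ i, q i ∧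
      a * (s ^ 2 + b ^ 2) = c * #T * b ∧ b * (s ^ 2 + a ^ 2) = c * #Tᶜ * a ∧
      c * ∑ i, q i * (bipartiteProfile T c *ᵥ qt) i = 2 * a * b := by
  obtain ⟨hX, hX'⟩ := h.bipartiteProfile_sum_mem hc hs
  obtain ⟨hY, hY'⟩ := h.bipartiteProfile_sum_compl hc hs
  have hsum := h.2.2.2.2
  have hX0 : 0 ≤ ∑ i ∈ T, q i := sum_nonneg fun i _ => h.1 i
  have hY0 : 0 ≤ ∑ i ∈ Tᶜ, q i := sum_nonneg fun i _ => h.1 i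
  have hY'0 : 0 ≤ ∑ i ∈ Tᶜ, qt i := sum_nonneg fun i _ => h.2.1 i
  rw [← sum_add_sum_compl T q, ← sum_add_sum_compl T qt] at hsum
  rw [sum_mul_bipartiteProfile_mulVec, ← sum_add_sum_compl T q]
  generalize ∑ i ∈ T, q i = X, ∑ i ∈ Tᶜ, q i = Y, ∑ i ∈ T, qt i = X', ∑ i ∈ Tᶜ, qt i = Y' at *
  -- `(X, Y)` and `(X', Y')` solve the same linear equation and have the same total.
  have hY'Y : Y' = Y := by
    have hpos : 0 < s ^ 2 + c * Y' * (c * Y) + #T * c := by positivity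
    refine mul_left_cancel₀ hpos.ne' ?_
    linear_combination hX - hX' - (s ^ 2 + c * Y' * (c * Y)) * hsum
  have hX'X : X' = X := by linarith
  subst Y' X'
  refine ⟨c * X, c * Y, mul_nonneg hc hX0, mul_nonneg hc hY0, by ring, ?_, ?_, by ring⟩
  · linear_combination c * hX
  · linear_combination c * hY

end BipartiteMasterEq

lemma two_mul_mul_eq_of_block_eqs {p p' s a b : ℝ} (hp : 0 < p) (hp' : 0 < p') (hs : s ≠ 0)
    (ha : 0 ≤ a) (hb : 0 ≤ b) (hab : 0 < a + b)
    (h₁ : a * (s ^ 2 + b ^ 2) = p * b) (h₂ : b * (s ^ 2 + a ^ 2) = p' * a) :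
    2 * a * b = p + p' - √((p - p') ^ 2 + 4 * s ^ 4) := by
  have hs2 : 0 < s ^ 2 := by positivity
  have ha0 : 0 < a := by
    refine ha.lt_of_ne' fun ha0 => hab.ne' ?_
    subst ha0
    have : b * s ^ 2 = 0 := by linear_combination h₂
    simp_all
  have hb0 : 0 < b := by
    refine hb.lt_of_ne' fun hb0 => hab.ne' ?_
    subst hb0
    have : a * s ^ 2 = 0 := by linear_combination h₁
    simp_all
  have hu : (s ^ 2 + b ^ 2) * (p - a * b) = p * s ^ 2 := by linear_combination -b * h₁
  have hu' : (s ^ 2 + a ^ 2) * (p' - a * b) = p' * s ^ 2 := by linear_combination -a * h₂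
  have hprod : (s ^ 2 + b ^ 2) * (s ^ 2 + a ^ 2) = p * p' := by
    refine mul_left_cancel₀ (mul_pos ha0 hb0).ne' ?_
    linear_combination (b * (s ^ 2 + a ^ 2)) * h₁ + p * b * h₂
  have hquad : (p - a * b) * (p' - a * b) = s ^ 4 := by
    refine mul_left_cancel₀ (mul_pos hp hp').ne' ?_
    linear_combination (p' - a * b) * (s ^ 2 + a ^ 2) * hu + p * s ^ 2 * hu' -
      (p - a * b) * (p' - a * b) * hprod
  have hlt : a * b < p := by
    have : 0 < (s ^ 2 + b ^ 2) * (p - a * b) := hu ▸ mul_pos hp hs2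
    linarith [pos_of_mul_pos_right this (by positivity)]
  have hlt' : a * b < p' := by
    have : 0 < (s ^ 2 + a ^ 2) * (p' - a * b) := hu' ▸ mul_pos hp' hs2
    linarith [pos_of_mul_pos_right this (by positivity)]
  have hsq : (p - p') ^ 2 + 4 * s ^ 4 = (p + p' - 2 * a * b) ^ 2 := by
    linear_combination -4 * hquad
  rw [hsq, Real.sqrt_sq (by linarith)]
  ring

lemma one_sub_two_mul_mul_eq_of_block_eqs {k s a b : ℝ} (hk : 1 < k) (hs : s ≠ 0)
    (ha : 0 ≤ a) (hb : 0 ≤ b) (hab : 0 < a + b)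
    (h₁ : a * (s ^ 2 + b ^ 2) = k⁻¹ * b) (h₂ : b * (s ^ 2 + a ^ 2) = (k - 1) / k * a) :
    1 - 2 * a * b = k⁻¹ * √((k - 2) ^ 2 + 4 * k ^ 2 * s ^ 4) := by
  have hk0 : 0 < k := by linarith
  rw [two_mul_mul_eq_of_block_eqs (by positivity) (div_pos (by linarith) hk0) hs ha hb hab h₁ h₂,
    show (k⁻¹ - (k - 1) / k) ^ 2 + 4 * s ^ 4 = k⁻¹ ^ 2 * ((k - 2) ^ 2 + 4 * k ^ 2 * s ^ 4) by
      field_simp; ring,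
    Real.sqrt_mul (sq_nonneg _), Real.sqrt_sq (inv_nonneg.2 hk0.le)]
  field_simp
  ring

lemma smul_hadamard_self_eq_bipartiteProfile {N m : ℕ} {A : Matrix (Fin N) (Fin N) ℝ}
    (hA : ∀ i j : Fin N,
      A i j = if ((i : ℕ) < m ∧ m ≤ (j : ℕ)) ∨ (m ≤ (i : ℕ) ∧ (j : ℕ) < m) then 1 else 0)
    (c : ℝ) :
    c • A ⊙ A = bipartiteProfile ({i | (i : ℕ) < m} : Finset (Fin N)) c := by
  ext i j
  simp only [hA, Matrix.smul_apply, hadamard_apply, bipartiteProfile_apply, mem_filter, mem_univ,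
    true_and]
  split_ifs <;> first | (exfalso; omega) | simp

lemma inv_mul_card_filter_val_lt {k m : ℕ} (hk : 0 < k) (hm : 0 < m) :
    ((k * m : ℕ) : ℝ)⁻¹ * #{i : Fin (k * m) | (i : ℕ) < m} = (k : ℝ)⁻¹ := by
  rw [Fin.card_filter_val_lt, min_eq_right (Nat.le_mul_of_pos_left m hk), Nat.cast_mul]
  field_simp

lemma inv_mul_card_compl_filter_val_lt {k m : ℕ} (hk : 0 < k) (hm : 0 < m) :
    ((k * m : ℕ) : ℝ)⁻¹ * #({i | (i : ℕ) < m} : Finset (Fin (k * m)))ᶜ = ((k : ℝ) - 1) / k := by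
  have hmk := Nat.le_mul_of_pos_left m hk
  rw [card_compl, Fintype.card_fin, Fin.card_filter_val_lt, min_eq_right hmk, Nat.cast_sub hmk,
    Nat.cast_mul]
  field_simp

/-- For the block variance profile built from the `km × km` matrix whose first
block row and first block column (off the diagonal block) consist of all-ones
`m × m` blocks, the spectral radius of `V = (1/n) A⊙A` equals `√(k−1)/k`, and for
`0 < s < ρ* = (k−1)^{1/4}/√k` the nontrivial solution of the Master Equations
satisfies `1 − (1/n)⟨q(s), V q̃(s)⟩ = (1/k)√((k−2)² + 4k²s⁴)`. -/
theorem block_profile_F_formula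
    (k m : ℕ) (hk : 2 ≤ k) (hm : 1 ≤ m)
    (A : Matrix (Fin (k * m)) (Fin (k * m)) ℝ)
    (hA : ∀ i j : Fin (k * m),
      A i j = if (((i : ℕ) < m ∧ m ≤ (j : ℕ)) ∨ (m ≤ (i : ℕ) ∧ (j : ℕ) < m))
        then 1 else 0)
    (V : Matrix (Fin (k * m)) (Fin (k * m)) ℝ)
    (hV : V = ((k * m : ℕ) : ℝ)⁻¹ • (Matrix.hadamard A A)) :
    specRad V = Real.sqrt ((k : ℝ) - 1) / k ∧
    ∀ s : ℝ, s ∈ Set.Ioo 0 (((k : ℝ) - 1) ^ ((1 : ℝ)/4) / Real.sqrt k) →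
      ∀ q qt : Fin (k * m) → ℝ, MasterEq V s q qt → (q, qt) ≠ (0, 0) →
        1 - ((k * m : ℕ) : ℝ)⁻¹ * ∑ i, q i * (V.mulVec qt) i =
          (k : ℝ)⁻¹ * Real.sqrt (((k : ℝ) - 2) ^ 2 + 4 * (k : ℝ) ^ 2 * s ^ 4) := by
  have hp := inv_mul_card_filter_val_lt (by omega : 0 < k) hm
  have hp' := inv_mul_card_compl_filter_val_lt (by omega : 0 < k) hm
  have hk1 : (1 : ℝ) < k := by exact_mod_cast hk
  have hk0 : (0 : ℝ) < k := by linarith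
  subst hV
  rw [smul_hadamard_self_eq_bipartiteProfile hA]
  refine ⟨?_, ?_⟩
  · rw [specRad_bipartiteProfile (hp ▸ by positivity) (hp' ▸ div_pos (by linarith) hk0), hp, hp',
      show (k : ℝ)⁻¹ * ((k - 1) / k) = (k - 1) / k ^ 2 by ring,
      Real.sqrt_div' _ (sq_nonneg _), Real.sqrt_sq hk0.le]
  · rintro s ⟨hs, -⟩ q qt hq hne
    obtain ⟨a, b, ha, hb, hab, h₁, h₂, hinner⟩ :=
      hq.bipartiteProfile_block_sums (by positivity) hs.ne'
    rw [hp] at h₁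
    rw [hp'] at h₂
    rw [hinner]
    exact one_sub_two_mul_mul_eq_of_block_eqs hk1 hs.ne' ha hb
      (hab ▸ mul_pos (by positivity) (hq.sum_pos hne)) h₁ h₂
end

section
/- Let n ≥ 1 and let d, d̃ ∈ (0,∞)^n with components d_i, d̃_i, and set ρ = (1/n) Σ_{i=1}^n d_i d̃_i. Then: (a) ρ equals the spectral radius of the matrix V = (1/n) d d̃ᵀ; (b) for each s ∈ (0, √ρ) there exists a unique u_n(s) > 0 such that (1/n) Σ_{i=1}^n d_i d̃_i / (s² + d_i d̃_i u_n(s)) = 1; (c) u_n(s) → 1 as s ↓ 0; and (d) setting u_n(s) = 0 for s ≥ √ρ, the function s ↦ u_n(s) is continuous on (0,∞). -/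
open Matrix Finset

/-!
The rank-one matrix `a bᵀ` maps every vector into the line spanned by `a`, so its only possible
nonzero eigenvalue is `b ⬝ᵥ a`. For `s ≠ 0` the left side `F(s, u)` of the scalar equation is
strictly decreasing in `u ≥ 0`, lies below `1 / u`, and equals `ρ / s²` at `u = 0`; so it has a
positive root exactly when `s < √ρ`, and for `a ≥ 0` we have `a < u(s) ↔ 1 < F(s, a)`. Since
`F(·, a)` is continuous for `a > 0`, even at `s = 0` where `F(0, a) = 1 / a`, these descriptions
of the sets `{a < u}` and `{u < b}` give both the continuity of `u` and `u(s) → 1`.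
-/

open scoped BigOperators Topology
open Filter Set

namespace Matrix

variable {K ι : Type*} [Field K] [Fintype ι] [DecidableEq ι]

theorem eq_zero_or_eq_dotProduct_of_hasEigenvalue_vecMulVec {a b : ι → K} {μ : K}
    (h : Module.End.HasEigenvalue (toLin' (vecMulVec a b)) μ) : μ = 0 ∨ μ = b ⬝ᵥ a := by
  obtain ⟨v, hv, hv0⟩ := h.exists_hasEigenvector
  rw [Module.End.mem_eigenspace_iff, toLin'_apply, vecMulVec_mulVec, op_smul_eq_smul] at hv
  by_cases hbv : b ⬝ᵥ v = 0
  · rw [hbv, zero_smul, eq_comm, smul_eq_zero] at hv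
    exact .inl (hv.resolve_right hv0)
  · refine .inr (mul_right_cancel₀ hbv ?_)
    have := congrArg (b ⬝ᵥ ·) hv
    simp only [dotProduct_smul, smul_eq_mul] at this
    linear_combination this.symm

theorem hasEigenvalue_vecMulVec {a : ι → K} (ha : a ≠ 0) (b : ι → K) :
    Module.End.HasEigenvalue (toLin' (vecMulVec a b)) (b ⬝ᵥ a) :=
  Module.End.hasEigenvalue_of_hasEigenvector ⟨by
    rw [Module.End.mem_eigenspace_iff, toLin'_apply, vecMulVec_mulVec, op_smul_eq_smul], ha⟩

end Matrix

theorem specRad_vecMulVec {n : ℕ} {a : Fin n → ℝ} (ha : a ≠ 0) (b : Fin n → ℝ) :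
    specRad (vecMulVec a b) = |b ⬝ᵥ a| := by
  have hmap : (vecMulVec a b).map (fun x : ℝ => (x : ℂ)) =
      vecMulVec (fun i => (a i : ℂ)) (fun i => (b i : ℂ)) := by
    ext i j; simp [vecMulVec_apply]
  have hdot : ((b ⬝ᵥ a : ℝ) : ℂ) = (fun i => (b i : ℂ)) ⬝ᵥ (fun i => (a i : ℂ)) := by
    simp [dotProduct]
  have ha' : (fun i => (a i : ℂ)) ≠ 0 := fun h =>
    ha (funext fun i => by simpa using congrFun h i)
  refine IsGreatest.csSup_eq ⟨⟨_, (Complex.norm_real _).symm, ?_⟩, ?_⟩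
  · rw [hmap, hdot]; exact hasEigenvalue_vecMulVec ha' _
  · rintro r ⟨μ, rfl, hμ⟩
    rw [hmap] at hμ
    rcases eq_zero_or_eq_dotProduct_of_hasEigenvalue_vecMulVec hμ with rfl | rfl
    · simp
    · rw [← hdot, Complex.norm_real, Real.norm_eq_abs]

section MasterEquation

variable {ι : Type*} [Fintype ι] {c : ι → ℝ} {s s₀ u a b : ℝ}

noncomputable def masterFn (c : ι → ℝ) (s u : ℝ) : ℝ :=
  𝔼 i, c i / (s ^ 2 + c i * u)

-- `0` when there is no positive root, which for `s ≠ 0` means `𝔼 i, c i ≤ s ^ 2`: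
-- this is the paper's extension of `u_n` by `0` beyond `√ρ`.
open Classical in
noncomputable def masterRoot (c : ι → ℝ) (s : ℝ) : ℝ :=
  if h : ∃ u, 0 < u ∧ masterFn c s u = 1 then h.choose else 0

theorem masterFn_zero_right (c : ι → ℝ) (s : ℝ) : masterFn c s 0 = (𝔼 i, c i) / s ^ 2 := by
  simp only [masterFn, mul_zero, add_zero, Finset.expect_div]

theorem masterFn_zero_left [Nonempty ι] (hc : ∀ i, c i ≠ 0) (u : ℝ) : masterFn c 0 u = u⁻¹ := by
  simp [masterFn, div_mul_cancel_left₀ (hc _)]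

variable (hc : ∀ i, 0 < c i)
include hc

theorem masterFn_strictAntiOn [Nonempty ι] (hs : s ≠ 0) : StrictAntiOn (masterFn c s) (Ici 0) := by
  intro u (hu : 0 ≤ u) v _ huv
  have hterm (i : ι) : c i / (s ^ 2 + c i * v) < c i / (s ^ 2 + c i * u) := by
    have := hc i
    gcongr
  exact Finset.expect_lt_expect (fun i _ => (hterm i).le)
    ⟨Classical.arbitrary ι, Finset.mem_univ _, hterm _⟩

theorem masterFn_lt_inv [Nonempty ι] (hs : s ≠ 0) (hu : 0 < u) : masterFn c s u < u⁻¹ := by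
  have hterm (i : ι) : c i / (s ^ 2 + c i * u) < u⁻¹ := by
    rw [← div_mul_cancel_left₀ (hc i).ne' u]
    have := hc i
    gcongr
    exact lt_add_of_pos_left _ (by positivity)
  exact Finset.expect_lt (fun i _ => (hterm i).le) ⟨Classical.arbitrary ι, Finset.mem_univ _, hterm _⟩

theorem continuous_masterFn_left (hu : 0 < u) : Continuous fun s => masterFn c s u := by
  simp only [masterFn, Fintype.expect_eq_sum_div_card]
  refine (continuous_finsetSum _ fun i _ => continuous_const.div (by fun_prop) fun s => ?_).div_const _
  have := hc i
  positivity

theorem continuousOn_masterFn_right (hs : s ≠ 0) : ContinuousOn (masterFn c s) (Ici 0) := by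
  unfold masterFn
  simp only [Fintype.expect_eq_sum_div_card]
  refine (continuousOn_finsetSum _ fun i _ =>
    continuousOn_const.div (by fun_prop) fun u (hu : 0 ≤ u) => ?_).div_const _
  have := hc i
  positivity

theorem exists_gt_masterFn_eq_one [Nonempty ι] (hs : s ≠ 0) (ha : 0 ≤ a)
    (h : 1 < masterFn c s a) : ∃ u, a < u ∧ masterFn c s u = 1 := by
  have hlt : masterFn c s (a + 1) < 1 :=
    (masterFn_lt_inv hc hs (by linarith)).trans_le (inv_le_one_of_one_le₀ (by linarith))
  obtain ⟨u, hu, hu1⟩ := intermediate_value_Ioo' (by linarith)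
    ((continuousOn_masterFn_right hc hs).mono (Icc_subset_Ici_self.trans (Ici_subset_Ici.2 ha)))
    ⟨hlt, h⟩
  exact ⟨u, hu.1, hu1⟩

variable [Nonempty ι]

theorem masterRoot_cases (hs : s ≠ 0) :
    (0 < masterRoot c s ∧ masterFn c s (masterRoot c s) = 1) ∨
      (masterRoot c s = 0 ∧ masterFn c s 0 ≤ 1) := by
  unfold masterRoot
  split_ifs with h
  · exact .inl h.choose_spec
  · exact .inr ⟨rfl, not_lt.1 fun h1 => h (exists_gt_masterFn_eq_one hc hs le_rfl h1)⟩

theorem masterRoot_nonneg (hs : s ≠ 0) : 0 ≤ masterRoot c s := by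
  rcases masterRoot_cases hc hs with h | h
  exacts [h.1.le, h.1.ge]

theorem lt_masterRoot_iff (hs : s ≠ 0) (ha : 0 ≤ a) :
    a < masterRoot c s ↔ 1 < masterFn c s a := by
  rcases masterRoot_cases hc hs with ⟨hpos, hroot⟩ | ⟨hzero, hle⟩
  · rw [← hroot]
    exact (StrictAntiOn.lt_iff_gt (masterFn_strictAntiOn hc hs) hpos.le ha).symm
  · rw [hzero]
    refine iff_of_false ha.not_gt fun h => ?_
    have := (masterFn_strictAntiOn hc hs).antitoneOn self_mem_Ici ha ha
    linarith

theorem masterRoot_lt_iff (hs : s ≠ 0) (hb : 0 < b) :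
    masterRoot c s < b ↔ masterFn c s b < 1 := by
  rcases masterRoot_cases hc hs with ⟨hpos, hroot⟩ | ⟨hzero, hle⟩
  · rw [← hroot]
    exact (StrictAntiOn.lt_iff_gt (masterFn_strictAntiOn hc hs) hb.le hpos.le).symm
  · rw [hzero]
    exact iff_of_true hb ((masterFn_strictAntiOn hc hs self_mem_Ici hb.le hb).trans_le hle)

theorem eq_masterRoot (hs : s ≠ 0) (hu : 0 < u) (hu1 : masterFn c s u = 1) :
    u = masterRoot c s :=
  le_antisymm (not_lt.1 fun h => ((masterRoot_lt_iff hc hs hu).1 h).ne hu1)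
    (not_lt.1 fun h => ((lt_masterRoot_iff hc hs hu.le).1 h).ne' hu1)

theorem masterRoot_pos_iff (hs : s ≠ 0) : 0 < masterRoot c s ↔ s ^ 2 < 𝔼 i, c i := by
  rw [lt_masterRoot_iff hc hs le_rfl, masterFn_zero_right, one_lt_div (by positivity)]

theorem masterFn_masterRoot (hs : s ≠ 0) (hpos : 0 < masterRoot c s) :
    masterFn c s (masterRoot c s) = 1 :=
  ((masterRoot_cases hc hs).resolve_right fun h => hpos.ne' h.1).2

theorem eventually_lt_masterRoot (ha : 0 < a) (h : 1 < masterFn c s₀ a) :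
    ∀ᶠ s in 𝓝[Ioi 0] s₀, a < masterRoot c s := by
  filter_upwards [self_mem_nhdsWithin,
    nhdsWithin_le_nhds ((continuous_masterFn_left hc ha).continuousAt.eventually_const_lt h)]
    with s (hs : 0 < s) hs1
  exact (lt_masterRoot_iff hc hs.ne' ha.le).2 hs1

theorem eventually_masterRoot_lt (hb : 0 < b) (h : masterFn c s₀ b < 1) :
    ∀ᶠ s in 𝓝[Ioi 0] s₀, masterRoot c s < b := by
  filter_upwards [self_mem_nhdsWithin,
    nhdsWithin_le_nhds ((continuous_masterFn_left hc hb).continuousAt.eventually_lt_const h)]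
    with s (hs : 0 < s) hs1
  exact (masterRoot_lt_iff hc hs.ne' hb).2 hs1

theorem continuousOn_masterRoot : ContinuousOn (masterRoot c) (Ioi 0) := by
  intro s₀ (hs₀ : 0 < s₀)
  refine tendsto_order.2 ⟨fun a ha => ?_, fun b hb => ?_⟩
  · rcases lt_or_ge a 0 with ha0 | ha0
    · filter_upwards [self_mem_nhdsWithin] with s (hs : 0 < s)
      exact ha0.trans_le (masterRoot_nonneg hc hs.ne')
    · obtain ⟨a', haa', ha'⟩ := exists_between ha
      have ha'0 : 0 < a' := ha0.trans_lt haa'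
      filter_upwards [eventually_lt_masterRoot hc ha'0
        ((lt_masterRoot_iff hc hs₀.ne' ha'0.le).1 ha')] with s hs
      exact haa'.trans hs
  · have hb0 : 0 < b := (masterRoot_nonneg hc hs₀.ne').trans_lt hb
    exact eventually_masterRoot_lt hc hb0 ((masterRoot_lt_iff hc hs₀.ne' hb0).1 hb)

theorem tendsto_masterRoot_nhdsGT_zero : Tendsto (masterRoot c) (𝓝[>] 0) (𝓝 1) := by
  have hF (u : ℝ) : masterFn c 0 u = u⁻¹ := masterFn_zero_left (fun i => (hc i).ne') u
  refine tendsto_order.2 ⟨fun a ha => ?_, fun b hb => ?_⟩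
  · obtain ⟨a', haa', ha'⟩ := exists_between (max_lt ha one_pos)
    have ha'0 : 0 < a' := (le_max_right a 0).trans_lt haa'
    filter_upwards [eventually_lt_masterRoot hc ha'0 (by rwa [hF, one_lt_inv₀ ha'0])] with s hs
    exact (le_max_left a 0).trans_lt (haa'.trans hs)
  · have hb0 : 0 < b := one_pos.trans hb
    exact eventually_masterRoot_lt hc hb0 (by rwa [hF, inv_lt_one₀ hb0])

end MasterEquation

/-- For a separable variance profile `V = (1/n) d d̃ᵀ` with positive `d, d̃`:
the spectral radius of `V` is `ρ = (1/n) ∑ dᵢ d̃ᵢ`; for each `s ∈ (0, √ρ)` the scalar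
master equation `(1/n) ∑ᵢ dᵢd̃ᵢ/(s² + dᵢd̃ᵢ u) = 1` has a unique positive solution
`u_n(s)`; `u_n(s) → 1` as `s ↓ 0`; and, extended by `0` for `s ≥ √ρ`, the function
`u_n` is continuous on `(0, ∞)`. -/
theorem separable_profile_scalar_equation
    (n : ℕ) (hn : 1 ≤ n) (d dt : Fin n → ℝ)
    (hd : ∀ i, 0 < d i) (hdt : ∀ i, 0 < dt i)
    (ρ : ℝ) (hρ : ρ = (n : ℝ)⁻¹ * ∑ i, d i * dt i) :
    ρ = specRad ((n : ℝ)⁻¹ • Matrix.vecMulVec d dt) ∧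
    ∃ u : ℝ → ℝ,
      (∀ s ∈ Set.Ioo 0 (Real.sqrt ρ),
        0 < u s ∧
        (n : ℝ)⁻¹ * ∑ i, d i * dt i / (s ^ 2 + d i * dt i * u s) = 1 ∧
        ∀ v : ℝ, 0 < v →
          (n : ℝ)⁻¹ * ∑ i, d i * dt i / (s ^ 2 + d i * dt i * v) = 1 → v = u s) ∧
      (∀ s, Real.sqrt ρ ≤ s → u s = 0) ∧
      Filter.Tendsto u (nhdsWithin 0 (Set.Ioi 0)) (nhds 1) ∧
      ContinuousOn u (Set.Ioi 0) := by
  have : Nonempty (Fin n) := ⟨⟨0, hn⟩⟩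
  set c : Fin n → ℝ := fun i => d i * dt i
  have hc (i : Fin n) : 0 < c i := mul_pos (hd i) (hdt i)
  have hF (s v : ℝ) : masterFn c s v = (n : ℝ)⁻¹ * ∑ i, d i * dt i / (s ^ 2 + d i * dt i * v) := by
    simp [masterFn, Fintype.expect_eq_sum_div_card, c, inv_mul_eq_div]
  have hρc : ρ = 𝔼 i, c i := by simp [hρ, Fintype.expect_eq_sum_div_card, c, inv_mul_eq_div]
  have hρpos : 0 < ρ := hρc ▸ Finset.expect_pos (fun i _ => hc i) Finset.univ_nonempty
  have hpos_iff {s : ℝ} (hs : 0 < s) : 0 < masterRoot c s ↔ s < √ρ := by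
    rw [masterRoot_pos_iff hc hs.ne', ← hρc, Real.lt_sqrt hs.le]
  refine ⟨?_, masterRoot c, fun s ⟨hs, hsρ⟩ => ?_, fun s hs => ?_,
    tendsto_masterRoot_nhdsGT_zero hc, continuousOn_masterRoot hc⟩
  · have hd0 : d ≠ 0 := fun h => (hd ⟨0, hn⟩).ne' (congrFun h _)
    have hdot : (n : ℝ)⁻¹ * (dt ⬝ᵥ d) = ρ := by simp [hρ, dotProduct, c, mul_comm]
    rw [← vecMulVec_smul, specRad_vecMulVec hd0, smul_dotProduct, smul_eq_mul, hdot,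
      abs_of_pos hρpos]
  · have hpos := (hpos_iff hs).2 hsρ
    exact ⟨hpos, hF s _ ▸ masterFn_masterRoot hc hs.ne' hpos,
      fun v hv hv1 => eq_masterRoot hc hs.ne' hv (hF s v ▸ hv1)⟩
  · have hs0 : 0 < s := (Real.sqrt_pos.2 hρpos).trans_le hs
    exact le_antisymm (not_lt.1 fun h => ((hpos_iff hs0).1 h).not_ge hs)
      (masterRoot_nonneg hc hs0.ne')
end

section
/- Let n ≥ 1, let d, d̃ ∈ (0,∞)^n, set ρ = (1/n) Σ_i d_i d̃_i, and for s ∈ (0, √ρ) let u_n(s) > 0 be the unique positive solution of (1/n) Σ_i d_i d̃_i/(s² + d_i d̃_i u_n(s)) = 1. Then u_n is continuously differentiable on (0, √ρ) with u_n'(s) = −2s · (Σ_i d_i d̃_i/(s² + d_i d̃_i u_n(s))²) / (Σ_i d_i² d̃_i²/(s² + d_i d̃_i u_n(s))²), and consequently lim_{s↓0} ( −u_n'(s)/(2πs) ) = (1/(nπ)) Σ_{i=1}^n 1/(d_i d̃_i). -/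
open Finset Real

open Filter Set Topology

/-! With `aᵢ = dᵢ d̃ᵢ` the master equation reads `F(s, u) = n` for `F(s, v) = ∑ aᵢ / (s² + aᵢ v)`,
which is strictly decreasing in `v` and continuous in `s`. This pins `u(s)` close to `u(s₀)`, so `u`
is continuous on `(0, √ρ)`, and `u(s) → 1` as `s ↓ 0` because `F(0, v) = n / v`. Subtracting the
equations at `s` and `s₀` gives the exact identity `(u(s) − u(s₀)) B(s) = (s₀² − s²) A(s)` with
cross sums `A, B` continuous in `s`, so the difference quotient tends to `−2 s₀ A(s₀) / B(s₀)`.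
Hence `−u'(s) / (2s) = A(s) / B(s) → (∑ 1/aᵢ) / n`. -/

theorem tendsto_of_strictAntiOn_of_eq {X : Type*} {l : Filter X} {F : X → ℝ → ℝ} {G : ℝ → ℝ}
    {u : X → ℝ} {c v₀ : ℝ} (hv₀ : 0 < v₀) (hF : ∀ x, StrictAntiOn (F x) (Ioi 0))
    (hG : StrictAntiOn G (Ioi 0)) (hGv₀ : G v₀ = c)
    (hlim : ∀ v, 0 < v → Tendsto (fun x => F x v) l (𝓝 (G v)))
    (hu : ∀ᶠ x in l, 0 < u x ∧ F x (u x) = c) : Tendsto u l (𝓝 v₀) := by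
  refine tendsto_order.2 ⟨fun b hb => ?_, fun b hb => ?_⟩
  · set b' := max b (v₀ / 2)
    have hb'pos : 0 < b' := lt_max_of_lt_right (by linarith)
    have hGb' : c < G b' := hGv₀ ▸ hG hb'pos hv₀ (max_lt hb (by linarith))
    filter_upwards [(hlim b' hb'pos).eventually_const_lt hGb', hu] with x hx ⟨hux, hFx⟩
    exact (le_max_left b _).trans_lt (((hF x).lt_iff_gt hux hb'pos).1 (hFx ▸ hx))
  · have hb0 : 0 < b := hv₀.trans hb
    filter_upwards [(hlim b hb0).eventually_lt_const (hGv₀ ▸ hG hv₀ hb0 hb), hu]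
      with x hx ⟨hux, hFx⟩
    exact ((hF x).lt_iff_gt hb0 hux).1 (hFx ▸ hx)

section MasterEquation

variable {ι : Type*} {a : ι → ℝ}

theorem masterDenom_pos (ha : ∀ i, 0 < a i) (s : ℝ) {v : ℝ} (hv : 0 < v) (i : ι) :
    0 < s ^ 2 + a i * v :=
  add_pos_of_nonneg_of_pos (sq_nonneg s) (mul_pos (ha i) hv)

variable [Fintype ι]

noncomputable def masterSum (a : ι → ℝ) (s v : ℝ) : ℝ := ∑ i, a i / (s ^ 2 + a i * v)

noncomputable def crossSum (a : ι → ℝ) (k : ℕ) (s v t w : ℝ) : ℝ :=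
  ∑ i, a i ^ k / ((s ^ 2 + a i * v) * (t ^ 2 + a i * w))

theorem masterSum_strictAntiOn [Nonempty ι] (ha : ∀ i, 0 < a i) (s : ℝ) :
    StrictAntiOn (masterSum a s) (Ioi 0) := by
  intro v hv w hw hvw
  refine sum_lt_sum_of_nonempty univ_nonempty fun i _ => ?_
  have := ha i
  have := masterDenom_pos ha s hv i
  gcongr

theorem continuous_masterSum (ha : ∀ i, 0 < a i) {v : ℝ} (hv : 0 < v) :
    Continuous fun s => masterSum a s v :=
  continuous_finsetSum _ fun i _ =>
    continuous_const.div (by fun_prop) fun s => (masterDenom_pos ha s hv i).ne'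

theorem masterSum_zero_one (ha : ∀ i, 0 < a i) : masterSum a 0 1 = Fintype.card ι := by
  simp [masterSum, div_self (ha _).ne']

theorem tendsto_of_masterSum_eq [Nonempty ι] (ha : ∀ i, 0 < a i) {l : Filter ℝ} {u : ℝ → ℝ}
    {s₀ v₀ c : ℝ} (hl : l ≤ 𝓝 s₀) (hv₀ : 0 < v₀) (hc : masterSum a s₀ v₀ = c)
    (hu : ∀ᶠ s in l, 0 < u s ∧ masterSum a s (u s) = c) : Tendsto u l (𝓝 v₀) :=
  tendsto_of_strictAntiOn_of_eq hv₀ (masterSum_strictAntiOn ha) (masterSum_strictAntiOn ha s₀) hc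
    (fun _ hv => ((continuous_masterSum ha hv).tendsto s₀).mono_left hl) hu

theorem continuousAt_of_masterSum_eq [Nonempty ι] (ha : ∀ i, 0 < a i) {u : ℝ → ℝ} {s₀ c : ℝ}
    (hu : ∀ᶠ s in 𝓝 s₀, 0 < u s ∧ masterSum a s (u s) = c) : ContinuousAt u s₀ :=
  tendsto_of_masterSum_eq ha le_rfl hu.self_of_nhds.1 hu.self_of_nhds.2 hu

theorem tendsto_crossSum {X : Type*} {l : Filter X} (k : ℕ) {s v t w : X → ℝ}
    {s₀ v₀ t₀ w₀ : ℝ} (hs : Tendsto s l (𝓝 s₀)) (hv : Tendsto v l (𝓝 v₀))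
    (ht : Tendsto t l (𝓝 t₀)) (hw : Tendsto w l (𝓝 w₀))
    (hv₀ : ∀ i, s₀ ^ 2 + a i * v₀ ≠ 0) (hw₀ : ∀ i, t₀ ^ 2 + a i * w₀ ≠ 0) :
    Tendsto (fun x => crossSum a k (s x) (v x) (t x) (w x)) l
      (𝓝 (crossSum a k s₀ v₀ t₀ w₀)) :=
  tendsto_finsetSum _ fun i _ => tendsto_const_nhds.div
    (((hs.pow 2).add (hv.const_mul _)).mul ((ht.pow 2).add (hw.const_mul _)))
    (mul_ne_zero (hv₀ i) (hw₀ i))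

theorem masterSum_sub_masterSum {s v t w : ℝ} (hv : ∀ i, s ^ 2 + a i * v ≠ 0)
    (hw : ∀ i, t ^ 2 + a i * w ≠ 0) :
    masterSum a s v - masterSum a t w =
      (t ^ 2 - s ^ 2) * crossSum a 1 s v t w + (w - v) * crossSum a 2 s v t w := by
  simp only [masterSum, crossSum, ← sum_sub_distrib, mul_sum, ← sum_add_distrib]
  refine sum_congr rfl fun i _ => ?_
  have := hv i
  have := hw i
  field_simp
  ring

theorem crossSum_two_pos [Nonempty ι] (ha : ∀ i, 0 < a i) {s v t w : ℝ} (hv : 0 < v)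
    (hw : 0 < w) : 0 < crossSum a 2 s v t w :=
  sum_pos (fun i _ => div_pos (pow_pos (ha i) 2)
    (mul_pos (masterDenom_pos ha s hv i) (masterDenom_pos ha t hw i))) univ_nonempty

noncomputable def masterDeriv (a : ι → ℝ) (s v : ℝ) : ℝ :=
  -2 * s * crossSum a 1 s v s v / crossSum a 2 s v s v

theorem hasDerivAt_of_masterSum_eq [Nonempty ι] (ha : ∀ i, 0 < a i) {u : ℝ → ℝ} {c s₀ : ℝ}
    (hu : ∀ᶠ s in 𝓝 s₀, 0 < u s ∧ masterSum a s (u s) = c) :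
    HasDerivAt u (masterDeriv a s₀ (u s₀)) s₀ := by
  obtain ⟨hu₀, hc₀⟩ := hu.self_of_nhds
  have hcont := continuousAt_of_masterSum_eq ha hu
  have h₀ : ∀ i, s₀ ^ 2 + a i * u s₀ ≠ 0 := fun i => (masterDenom_pos ha s₀ hu₀ i).ne'
  have hlim : Tendsto (fun s => -(s + s₀) * crossSum a 1 s (u s) s₀ (u s₀) /
      crossSum a 2 s (u s) s₀ (u s₀)) (𝓝 s₀) (𝓝 (masterDeriv a s₀ (u s₀))) := by
    have := ((tendsto_id.add (tendsto_const_nhds (x := s₀))).neg.mul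
      (tendsto_crossSum 1 tendsto_id hcont tendsto_const_nhds tendsto_const_nhds h₀ h₀)).div
      (tendsto_crossSum 2 tendsto_id hcont tendsto_const_nhds tendsto_const_nhds h₀ h₀)
      (crossSum_two_pos ha hu₀ hu₀).ne'
    rwa [show masterDeriv a s₀ (u s₀) = -(s₀ + s₀) * crossSum a 1 s₀ (u s₀) s₀ (u s₀) /
      crossSum a 2 s₀ (u s₀) s₀ (u s₀) by unfold masterDeriv; ring]
  rw [hasDerivAt_iff_tendsto_slope]
  refine (hlim.mono_left nhdsWithin_le_nhds).congr' ?_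
  filter_upwards [nhdsWithin_le_nhds hu, self_mem_nhdsWithin] with s ⟨hus, hcs⟩ hs
  have key := masterSum_sub_masterSum (fun i => (masterDenom_pos ha s hus i).ne') h₀
  rw [hcs, hc₀, sub_self] at key
  have hB : crossSum a 2 s (u s) s₀ (u s₀) ≠ 0 := (crossSum_two_pos ha hus hu₀).ne'
  have hs' : s - s₀ ≠ 0 := sub_ne_zero.2 hs
  rw [slope_def_field]
  field_simp
  linear_combination -key

theorem continuousAt_masterDeriv_comp [Nonempty ι] (ha : ∀ i, 0 < a i) {u : ℝ → ℝ} {s₀ : ℝ}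
    (hcont : ContinuousAt u s₀) (hu₀ : 0 < u s₀) :
    ContinuousAt (fun s => masterDeriv a s (u s)) s₀ := by
  have h₀ : ∀ i, s₀ ^ 2 + a i * u s₀ ≠ 0 := fun i => (masterDenom_pos ha s₀ hu₀ i).ne'
  exact (tendsto_id.const_mul (-2) |>.mul
    (tendsto_crossSum 1 tendsto_id hcont tendsto_id hcont h₀ h₀)).div
    (tendsto_crossSum 2 tendsto_id hcont tendsto_id hcont h₀ h₀) (crossSum_two_pos ha hu₀ hu₀).ne'

theorem continuousOn_deriv_of_masterSum_eq [Nonempty ι] (ha : ∀ i, 0 < a i) {u : ℝ → ℝ}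
    {c : ℝ} {U : Set ℝ} (hU : IsOpen U) (hu : ∀ s ∈ U, 0 < u s ∧ masterSum a s (u s) = c) :
    ContinuousOn (deriv u) U := by
  intro s₀ hs₀
  have hu' : ∀ᶠ s in 𝓝 s₀, 0 < u s ∧ masterSum a s (u s) = c :=
    eventually_of_mem (hU.mem_nhds hs₀) hu
  have hderiv : deriv u =ᶠ[𝓝 s₀] fun s => masterDeriv a s (u s) :=
    eventually_of_mem (hU.mem_nhds hs₀) fun s hs =>
      (hasDerivAt_of_masterSum_eq ha (eventually_of_mem (hU.mem_nhds hs) hu)).deriv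
  exact ((continuousAt_masterDeriv_comp ha (continuousAt_of_masterSum_eq ha hu')
    (hu s₀ hs₀).1).congr hderiv.symm).continuousWithinAt

theorem tendsto_neg_masterDeriv_div [Nonempty ι] (ha : ∀ i, 0 < a i) {u : ℝ → ℝ}
    (hu : ∀ᶠ s in 𝓝[>] 0, 0 < u s ∧ masterSum a s (u s) = Fintype.card ι) :
    Tendsto (fun s => -masterDeriv a s (u s) / (2 * s)) (𝓝[>] 0)
      (𝓝 ((Fintype.card ι : ℝ)⁻¹ * ∑ i, (a i)⁻¹)) := by
  have hu₁ : Tendsto u (𝓝[>] 0) (𝓝 1) :=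
    tendsto_of_masterSum_eq ha nhdsWithin_le_nhds one_pos (masterSum_zero_one ha) hu
  have h₀ : ∀ i, (0 : ℝ) ^ 2 + a i * 1 ≠ 0 := fun i => (masterDenom_pos ha 0 one_pos i).ne'
  have hs : Tendsto (fun s : ℝ => s) (𝓝[>] 0) (𝓝 0) := nhdsWithin_le_nhds
  have hlim := (tendsto_crossSum 1 hs hu₁ hs hu₁ h₀ h₀).div (tendsto_crossSum 2 hs hu₁ hs hu₁ h₀ h₀)
    (crossSum_two_pos ha one_pos one_pos).ne'
  have hval : crossSum a 1 0 1 0 1 / crossSum a 2 0 1 0 1 =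
      (Fintype.card ι : ℝ)⁻¹ * ∑ i, (a i)⁻¹ := by
    have h₁ : crossSum a 1 0 1 0 1 = ∑ i, (a i)⁻¹ :=
      sum_congr rfl fun i _ => by simp [div_mul_cancel_left₀ (ha i).ne']
    have h₂ : crossSum a 2 0 1 0 1 = Fintype.card ι := by
      simp [crossSum, ← sq, div_self (pow_ne_zero 2 (ha _).ne')]
    rw [h₁, h₂, inv_mul_eq_div]
  rw [← hval]
  refine hlim.congr' ?_
  filter_upwards [self_mem_nhdsWithin] with s (hs : 0 < s)
  simp only [Pi.div_apply, masterDeriv]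
  field_simp

end MasterEquation

/-- For a separable variance profile with positive `d, d̃` and
`ρ = (1/n) ∑ dᵢ d̃ᵢ`, the solution `u_n` of the scalar master equation is
continuously differentiable on `(0, √ρ)` with
`u_n'(s) = −2s (∑ᵢ dᵢd̃ᵢ/(s²+dᵢd̃ᵢu)²)/(∑ᵢ dᵢ²d̃ᵢ²/(s²+dᵢd̃ᵢu)²)`, and consequently
`lim_{s↓0} (−u_n'(s)/(2πs)) = (1/(nπ)) ∑ᵢ 1/(dᵢd̃ᵢ)` (the value of the density of
`μ_n` at zero). -/
theorem separable_profile_derivative_and_density_at_zero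
    (n : ℕ) (hn : 1 ≤ n) (d dt : Fin n → ℝ)
    (hd : ∀ i, 0 < d i) (hdt : ∀ i, 0 < dt i)
    (ρ : ℝ) (hρ : ρ = (n : ℝ)⁻¹ * ∑ i, d i * dt i)
    (u : ℝ → ℝ)
    (hu : ∀ s ∈ Set.Ioo 0 (Real.sqrt ρ),
      0 < u s ∧ (n : ℝ)⁻¹ * ∑ i, d i * dt i / (s ^ 2 + d i * dt i * u s) = 1) :
    (∀ s ∈ Set.Ioo 0 (Real.sqrt ρ),
      HasDerivAt u
        (-2 * s * (∑ i, d i * dt i / (s ^ 2 + d i * dt i * u s) ^ 2) /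
          (∑ i, (d i) ^ 2 * (dt i) ^ 2 / (s ^ 2 + d i * dt i * u s) ^ 2)) s) ∧
    ContinuousOn (deriv u) (Set.Ioo 0 (Real.sqrt ρ)) ∧
    Filter.Tendsto (fun s => -(deriv u s) / (2 * Real.pi * s))
      (nhdsWithin 0 (Set.Ioi 0))
      (nhds ((n * Real.pi)⁻¹ * ∑ i, (d i * dt i)⁻¹)) := by
  have : Nonempty (Fin n) := ⟨⟨0, hn⟩⟩
  set a : Fin n → ℝ := fun i => d i * dt i
  have ha : ∀ i, 0 < a i := fun i => mul_pos (hd i) (hdt i)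
  have hρ₀ : 0 < √ρ :=
    sqrt_pos.2 (hρ ▸ mul_pos (by positivity) (sum_pos (fun i _ => ha i) univ_nonempty))
  have hmaster : ∀ s ∈ Set.Ioo 0 √ρ, 0 < u s ∧ masterSum a s (u s) = Fintype.card (Fin n) := by
    intro s hs
    obtain ⟨hus, heq⟩ := hu s hs
    rw [Fintype.card_fin]
    exact ⟨hus, ((inv_mul_eq_one₀ (Nat.cast_ne_zero.2 (by omega))).1 heq).symm⟩
  have hderiv : ∀ s ∈ Set.Ioo 0 √ρ, HasDerivAt u (masterDeriv a s (u s)) s := fun s hs =>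
    hasDerivAt_of_masterSum_eq ha (eventually_of_mem (isOpen_Ioo.mem_nhds hs) hmaster)
  refine ⟨fun s hs => ?_, continuousOn_deriv_of_masterSum_eq ha isOpen_Ioo hmaster, ?_⟩
  · simpa [masterDeriv, crossSum, ← sq, mul_pow, a] using hderiv s hs
  · have hlim := (tendsto_neg_masterDeriv_div ha
      (eventually_of_mem (Ioo_mem_nhdsGT hρ₀) hmaster)).div_const π
    rw [Fintype.card_fin] at hlim
    rw [show (n * π)⁻¹ * ∑ i, (d i * dt i)⁻¹ = ((n : ℝ)⁻¹ * ∑ i, (a i)⁻¹) / π by ring]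
    refine hlim.congr' ?_
    filter_upwards [Ioo_mem_nhdsGT hρ₀] with s hs
    rw [(hderiv s hs).deriv]
    ring
end

section
/- Let d, d̃ : [0,1] → [0,∞) be continuous functions with d(x) > 0 and d̃(x) > 0 for all x ∈ (0,1], and set ρ_∞ = ∫_0^1 d(x) d̃(x) dx. Then: (a) for each s ∈ (0, √ρ_∞) there exists a unique u_∞(s) > 0 such that ∫_0^1 d(x) d̃(x) / (s² + d(x) d̃(x) u_∞(s)) dx = 1; (b) setting u_∞(s) = 0 for s ≥ √ρ_∞, the function s ↦ u_∞(s) is continuous on (0,∞); and (c) the limit lim_{s↓0} u_∞(s) exists and equals 1. -/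
/-!
For `s ≠ 0` the map `u ↦ ∫ f / (s² + f u)` is continuous and strictly decreasing on `[0, ∞)`,
starts at `∫ f / s²` and stays below `1 / u`; so it takes the value `1` exactly once when
`s² < ∫ f`, and never otherwise. The solution is characterised by order alone: `c < u(s)` iff
the integral at `c` exceeds `1`, and `u(s) < b` iff the integral at `b` is below `1`. Hence
continuity of the integral in `s` passes to `u` (also where `u` drops to `0`), and since the
integral at `c` tends to `1 / c` as `s → 0`, `u(s) → 1`.
-/

open MeasureTheory Real Set Filter Topology

section

variable {α : Type*} [MeasurableSpace α] {μ : Measure α}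

theorem integral_lt_integral_of_ae_lt [NeZero μ] {g h : α → ℝ} (hg : Integrable g μ)
    (hh : Integrable h μ) (hlt : ∀ᵐ x ∂μ, g x < h x) : ∫ x, g x ∂μ < ∫ x, h x ∂μ := by
  rw [← sub_pos, ← integral_sub hh hg, integral_pos_iff_support_of_nonneg_ae
    (hlt.mono fun x hx => (sub_pos.2 hx).le) (hh.sub hg)]
  have hsupp : Function.support (fun x => h x - g x) =ᵐ[μ] (univ : Set α) :=
    ae_eq_univ.2 (ae_iff.1 (hlt.mono fun x hx => (sub_pos.2 hx).ne'))
  rw [measure_congr hsupp]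
  exact Measure.measure_univ_pos.2 (NeZero.ne μ)

end

namespace SampledSeparable

variable {α : Type*} [MeasurableSpace α] {μ : Measure α}

noncomputable def scalarIntegral (μ : Measure α) (f : α → ℝ) (s u : ℝ) : ℝ :=
  ∫ x, f x / (s ^ 2 + f x * u) ∂μ

variable {f : α → ℝ} {s u b c : ℝ}

theorem div_sq_add_mul_le {y t u : ℝ} (hy : 0 ≤ y) (ht : t ≠ 0) (hu : 0 ≤ u) :
    ‖y / (t ^ 2 + y * u)‖ ≤ y / t ^ 2 := by
  rw [norm_of_nonneg (by positivity)]
  gcongr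
  nlinarith

theorem div_sq_add_mul_lt_div_sq_add_mul {y t u v : ℝ} (hy : 0 < y) (ht : t ≠ 0) (hu : 0 ≤ u)
    (huv : u < v) : y / (t ^ 2 + y * v) < y / (t ^ 2 + y * u) := by
  gcongr

theorem div_sq_add_mul_lt_inv {y t c : ℝ} (hy : 0 ≤ y) (ht : t ≠ 0) (hc : 0 < c) :
    y / (t ^ 2 + y * c) < c⁻¹ := by
  rw [div_lt_iff₀ (by positivity)]
  field_simp
  nlinarith [sq_pos_of_ne_zero ht]

theorem aestronglyMeasurable_div_sq_add_mul (hf : AEMeasurable f μ) (s u : ℝ) :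
    AEStronglyMeasurable (fun x => f x / (s ^ 2 + f x * u)) μ :=
  (hf.div (aemeasurable_const.add (hf.mul_const u))).aestronglyMeasurable

theorem integrable_div_sq_add_mul (hf : Integrable f μ) (hf0 : 0 ≤ᵐ[μ] f) (hs : s ≠ 0)
    (hu : 0 ≤ u) : Integrable (fun x => f x / (s ^ 2 + f x * u)) μ :=
  (hf.div_const (s ^ 2)).mono' (aestronglyMeasurable_div_sq_add_mul hf.aemeasurable s u)
    (hf0.mono fun _ hx => div_sq_add_mul_le hx hs hu)

theorem scalarIntegral_zero (s : ℝ) : scalarIntegral μ f s 0 = (∫ x, f x ∂μ) / s ^ 2 := by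
  simp [scalarIntegral, integral_div]

theorem continuousOn_scalarIntegral (hf : Integrable f μ) (hf0 : 0 ≤ᵐ[μ] f) (hs : s ≠ 0) :
    ContinuousOn (scalarIntegral μ f s) (Ici 0) := by
  refine continuousOn_of_dominated
    (fun u _ => aestronglyMeasurable_div_sq_add_mul hf.aemeasurable s u)
    (fun u hu => hf0.mono fun _ hx => div_sq_add_mul_le hx hs hu) (hf.div_const (s ^ 2)) ?_
  filter_upwards [hf0] with x (hx : 0 ≤ f x)
  exact continuousOn_const.div (by fun_prop) fun u (hu : 0 ≤ u) => by positivity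

theorem continuousAt_scalarIntegral_left (hf : Integrable f μ) (hf0 : 0 ≤ᵐ[μ] f) (hs : s ≠ 0)
    (hu : 0 ≤ u) : ContinuousAt (fun t => scalarIntegral μ f t u) s := by
  have hnear : ∀ᶠ t in 𝓝 s, s ^ 2 / 2 < t ^ 2 :=
    (continuous_pow 2).continuousAt.eventually_const_lt (half_lt_self (by positivity))
  refine continuousAt_of_dominated
    (Eventually.of_forall fun t => aestronglyMeasurable_div_sq_add_mul hf.aemeasurable t u)
    ?_ (hf.div_const (s ^ 2 / 2)) ?_
  · filter_upwards [hnear] with t ht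
    filter_upwards [hf0] with x hx
    have ht0 : t ≠ 0 := by rintro rfl; linarith [sq_nonneg s]
    exact (div_sq_add_mul_le hx ht0 hu).trans (by gcongr)
  · filter_upwards [hf0] with x (hx : 0 ≤ f x)
    exact continuousAt_const.div (by fun_prop) (by positivity)

theorem tendsto_scalarIntegral_nhdsNE_zero [IsProbabilityMeasure μ] (hf : AEMeasurable f μ)
    (hpos : ∀ᵐ x ∂μ, 0 < f x) (hc : 0 < c) :
    Tendsto (fun s => scalarIntegral μ f s c) (𝓝[≠] 0) (𝓝 c⁻¹) := by
  have hlim : c⁻¹ = ∫ _, c⁻¹ ∂μ := by simp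
  rw [hlim]
  refine tendsto_integral_filter_of_dominated_convergence (fun _ => c⁻¹)
    (Eventually.of_forall fun s => aestronglyMeasurable_div_sq_add_mul hf s c) ?_
    (integrable_const _) ?_
  · filter_upwards [self_mem_nhdsWithin] with s hs
    filter_upwards [hpos] with x hx
    exact (norm_of_nonneg (by positivity)).trans_le (div_sq_add_mul_lt_inv hx.le hs hc).le
  · filter_upwards [hpos] with x hx
    have hval : f x / ((0 : ℝ) ^ 2 + f x * c) = c⁻¹ := by field_simp; ring
    rw [← hval]
    exact (continuousAt_const.div (by fun_prop) (by positivity)).tendsto.mono_left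
      nhdsWithin_le_nhds

theorem strictAntiOn_scalarIntegral [NeZero μ] (hf : Integrable f μ) (hpos : ∀ᵐ x ∂μ, 0 < f x)
    (hs : s ≠ 0) : StrictAntiOn (scalarIntegral μ f s) (Ici 0) := by
  have hf0 : 0 ≤ᵐ[μ] f := hpos.mono fun _ hx => hx.le
  intro u (hu : 0 ≤ u) v (hv : 0 ≤ v) huv
  exact integral_lt_integral_of_ae_lt (integrable_div_sq_add_mul hf hf0 hs hv)
    (integrable_div_sq_add_mul hf hf0 hs hu)
    (hpos.mono fun _ hx => div_sq_add_mul_lt_div_sq_add_mul hx hs hu huv)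

theorem scalarIntegral_lt_inv [IsProbabilityMeasure μ] (hf : Integrable f μ) (hf0 : 0 ≤ᵐ[μ] f)
    (hs : s ≠ 0) (hc : 0 < c) : scalarIntegral μ f s c < c⁻¹ := by
  have h := integral_lt_integral_of_ae_lt (integrable_div_sq_add_mul hf hf0 hs hc.le)
    (integrable_const c⁻¹) (hf0.mono fun _ hx => div_sq_add_mul_lt_inv hx hs hc)
  simpa [scalarIntegral] using h

theorem exists_gt_scalarIntegral_eq_one [IsProbabilityMeasure μ] (hf : Integrable f μ)
    (hpos : ∀ᵐ x ∂μ, 0 < f x) (hs : s ≠ 0) (hc : 0 ≤ c) (h : 1 < scalarIntegral μ f s c) :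
    ∃ u, c < u ∧ scalarIntegral μ f s u = 1 := by
  have hf0 : 0 ≤ᵐ[μ] f := hpos.mono fun _ hx => hx.le
  have hF1 : scalarIntegral μ f s 1 < 1 := by
    simpa using scalarIntegral_lt_inv hf hf0 hs one_pos
  have hc1 : c < 1 := by
    by_contra! h1
    have := (strictAntiOn_scalarIntegral hf hpos hs).antitoneOn (mem_Ici.2 zero_le_one)
      (mem_Ici.2 hc) h1
    linarith
  obtain ⟨u, hu, hFu⟩ := intermediate_value_Ioo' hc1.le
    ((continuousOn_scalarIntegral hf hf0 hs).mono fun _ hx => hc.trans hx.1) ⟨hF1, h⟩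
  exact ⟨u, hu.1, hFu⟩

open Classical in
/-- The positive solution `u` of `scalarIntegral μ f s u = 1`, and `0` when there is none. -/
noncomputable def scalarSolution (μ : Measure α) (f : α → ℝ) (s : ℝ) : ℝ :=
  if h : ∃ u, 0 < u ∧ scalarIntegral μ f s u = 1 then h.choose else 0

theorem scalarSolution_nonneg : 0 ≤ scalarSolution μ f s := by
  unfold scalarSolution
  split_ifs with h
  exacts [h.choose_spec.1.le, le_rfl]

theorem scalarIntegral_scalarSolution (h : 0 < scalarSolution μ f s) :
    scalarIntegral μ f s (scalarSolution μ f s) = 1 := by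
  unfold scalarSolution at *
  split_ifs at * with hex
  · exact hex.choose_spec.2
  · exact absurd h (lt_irrefl 0)

theorem scalarSolution_eq [NeZero μ] (hf : Integrable f μ) (hpos : ∀ᵐ x ∂μ, 0 < f x)
    (hs : s ≠ 0) (hu : 0 < u) (h : scalarIntegral μ f s u = 1) : scalarSolution μ f s = u := by
  have hex : ∃ u, 0 < u ∧ scalarIntegral μ f s u = 1 := ⟨u, hu, h⟩
  rw [scalarSolution, dif_pos hex]
  exact (strictAntiOn_scalarIntegral hf hpos hs).injOn (mem_Ici.2 hex.choose_spec.1.le)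
    (mem_Ici.2 hu.le) (hex.choose_spec.2.trans h.symm)

theorem lt_scalarSolution_iff [IsProbabilityMeasure μ] (hf : Integrable f μ)
    (hpos : ∀ᵐ x ∂μ, 0 < f x) (hs : s ≠ 0) (hc : 0 ≤ c) :
    c < scalarSolution μ f s ↔ 1 < scalarIntegral μ f s c := by
  constructor
  · intro h
    rw [← scalarIntegral_scalarSolution (hc.trans_lt h)]
    exact strictAntiOn_scalarIntegral hf hpos hs (mem_Ici.2 hc) (mem_Ici.2 scalarSolution_nonneg) h
  · intro h
    obtain ⟨u, hcu, hu⟩ := exists_gt_scalarIntegral_eq_one hf hpos hs hc h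
    rwa [scalarSolution_eq hf hpos hs (hc.trans_lt hcu) hu]

theorem scalarSolution_lt_iff [IsProbabilityMeasure μ] (hf : Integrable f μ)
    (hpos : ∀ᵐ x ∂μ, 0 < f x) (hs : s ≠ 0) (hb : 0 < b) :
    scalarSolution μ f s < b ↔ scalarIntegral μ f s b < 1 := by
  constructor
  · intro h
    by_contra! h1
    rcases h1.lt_or_eq with h1 | h1
    · exact lt_asymm h ((lt_scalarSolution_iff hf hpos hs hb.le).2 h1)
    · exact h.ne (scalarSolution_eq hf hpos hs hb h1.symm)
  · intro h
    by_contra! h1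
    have hsol := scalarIntegral_scalarSolution (hb.trans_le h1)
    have := (strictAntiOn_scalarIntegral hf hpos hs).antitoneOn (mem_Ici.2 hb.le)
      (mem_Ici.2 scalarSolution_nonneg) h1
    linarith

theorem scalarSolution_pos [IsProbabilityMeasure μ] (hf : Integrable f μ)
    (hpos : ∀ᵐ x ∂μ, 0 < f x) (hs : s ≠ 0) (h : s ^ 2 < ∫ x, f x ∂μ) :
    0 < scalarSolution μ f s := by
  rw [lt_scalarSolution_iff hf hpos hs le_rfl, scalarIntegral_zero, one_lt_div (by positivity)]
  exact h

theorem scalarSolution_eq_zero [NeZero μ] (hf : Integrable f μ) (hpos : ∀ᵐ x ∂μ, 0 < f x)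
    (hs : s ≠ 0) (h : ∫ x, f x ∂μ ≤ s ^ 2) : scalarSolution μ f s = 0 := by
  refine scalarSolution_nonneg.antisymm' (not_lt.1 fun hsol => ?_)
  have h1 := (strictAntiOn_scalarIntegral hf hpos hs) (mem_Ici.2 le_rfl) (mem_Ici.2 hsol.le) hsol
  rw [scalarIntegral_scalarSolution hsol, scalarIntegral_zero] at h1
  exact h1.not_ge ((div_le_one (by positivity)).2 h)

theorem tendsto_scalarSolution [IsProbabilityMeasure μ] (hf : Integrable f μ)
    (hpos : ∀ᵐ x ∂μ, 0 < f x) {l : Filter ℝ} {a : ℝ} (ha : 0 ≤ a) (hl : ∀ᶠ s in l, s ≠ 0)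
    (hbelow : ∀ c, 0 < c → c < a → ∀ᶠ s in l, 1 < scalarIntegral μ f s c)
    (habove : ∀ b, a < b → ∀ᶠ s in l, scalarIntegral μ f s b < 1) :
    Tendsto (scalarSolution μ f) l (𝓝 a) := by
  refine tendsto_order.2 ⟨fun a' ha' => ?_, fun b hb => ?_⟩
  · rcases lt_or_ge a' 0 with ha'0 | ha'0
    · exact Eventually.of_forall fun _ => ha'0.trans_le scalarSolution_nonneg
    have hc : 0 < (a' + a) / 2 := by linarith
    filter_upwards [hl, hbelow _ hc (by linarith)] with s hs h
    exact lt_trans (by linarith) ((lt_scalarSolution_iff hf hpos hs hc.le).2 h)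
  · filter_upwards [hl, habove b hb] with s hs h
    exact (scalarSolution_lt_iff hf hpos hs (ha.trans_lt hb)).2 h

theorem continuousAt_scalarSolution [IsProbabilityMeasure μ] (hf : Integrable f μ)
    (hpos : ∀ᵐ x ∂μ, 0 < f x) (hs : s ≠ 0) : ContinuousAt (scalarSolution μ f) s := by
  have hf0 : 0 ≤ᵐ[μ] f := hpos.mono fun _ hx => hx.le
  refine tendsto_scalarSolution hf hpos scalarSolution_nonneg (eventually_ne_nhds hs)
    (fun c hc hcs => ?_) (fun b hb => ?_)
  · exact (continuousAt_scalarIntegral_left hf hf0 hs hc.le).eventually_const_lt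
      ((lt_scalarSolution_iff hf hpos hs hc.le).1 hcs)
  · have hb0 := scalarSolution_nonneg.trans_lt hb
    exact (continuousAt_scalarIntegral_left hf hf0 hs hb0.le).eventually_lt_const
      ((scalarSolution_lt_iff hf hpos hs hb0).1 hb)

theorem tendsto_scalarSolution_nhdsNE_zero [IsProbabilityMeasure μ] (hf : Integrable f μ)
    (hpos : ∀ᵐ x ∂μ, 0 < f x) : Tendsto (scalarSolution μ f) (𝓝[≠] 0) (𝓝 1) := by
  refine tendsto_scalarSolution hf hpos zero_le_one self_mem_nhdsWithin
    (fun c hc hc1 => ?_) (fun b hb => ?_)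
  · exact (tendsto_scalarIntegral_nhdsNE_zero hf.aemeasurable hpos hc).eventually_const_lt
      ((one_lt_inv₀ hc).2 hc1)
  · exact (tendsto_scalarIntegral_nhdsNE_zero hf.aemeasurable hpos
      (zero_lt_one.trans hb)).eventually_lt_const (inv_lt_one_of_one_lt₀ hb)

end SampledSeparable

open SampledSeparable in
theorem sampled_separable_scalar_equation_general
    (d dt : ℝ → ℝ)
    (hdc : ContinuousOn d (Set.Icc 0 1)) (hdtc : ContinuousOn dt (Set.Icc 0 1))
    (hdpos : ∀ x ∈ Set.Ioc (0:ℝ) 1, 0 < d x ∧ 0 < dt x)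
    (ρ : ℝ) (hρ : ρ = ∫ x in Set.Icc (0:ℝ) 1, d x * dt x) :
    ∃ u : ℝ → ℝ,
      (∀ s ∈ Set.Ioo 0 (Real.sqrt ρ),
        0 < u s ∧
        (∫ x in Set.Icc (0:ℝ) 1, d x * dt x / (s ^ 2 + d x * dt x * u s)) = 1 ∧
        ∀ v : ℝ, 0 < v →
          (∫ x in Set.Icc (0:ℝ) 1, d x * dt x / (s ^ 2 + d x * dt x * v)) = 1 →
          v = u s) ∧
      (∀ s, Real.sqrt ρ ≤ s → u s = 0) ∧
      ContinuousOn u (Set.Ioi 0) ∧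
      Filter.Tendsto u (nhdsWithin 0 (Set.Ioi 0)) (nhds 1) := by
  set μ := volume.restrict (Icc (0 : ℝ) 1)
  have : IsProbabilityMeasure μ := ⟨by simp [μ]⟩
  have hf : Integrable (fun x => d x * dt x) μ := (hdc.mul hdtc).integrableOn_Icc
  have hpos : ∀ᵐ x ∂μ, 0 < d x * dt x := by
    rw [show μ = volume.restrict (Ioc 0 1) from Measure.restrict_congr_set Ioc_ae_eq_Icc.symm]
    exact ae_restrict_of_forall_mem measurableSet_Ioc fun x hx =>
      mul_pos (hdpos x hx).1 (hdpos x hx).2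
  have hρpos : 0 < ρ := by
    simpa [hρ] using integral_lt_integral_of_ae_lt (integrable_zero _ _ μ) hf hpos
  refine ⟨scalarSolution μ (fun x => d x * dt x), fun s hs => ?_, fun s hs => ?_,
    fun s hs => (continuousAt_scalarSolution hf hpos (ne_of_gt hs)).continuousWithinAt,
    (tendsto_scalarSolution_nhdsNE_zero hf hpos).mono_left
      (nhdsWithin_mono 0 fun _ hx => ne_of_gt hx)⟩
  · have hsol := scalarSolution_pos hf hpos hs.1.ne' (hρ ▸ (lt_sqrt hs.1.le).1 hs.2)
    exact ⟨hsol, scalarIntegral_scalarSolution hsol,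
      fun v hv hv1 => (scalarSolution_eq hf hpos hs.1.ne' hv hv1).symm⟩
  · have hs0 : 0 < s := (sqrt_pos.2 hρpos).trans_le hs
    exact scalarSolution_eq_zero hf hpos hs0.ne' (hρ ▸ (sqrt_le_left hs0.le).1 hs)

/-- For a sampled separable variance profile with continuous `d, d̃ : [0,1] → [0,∞)`
that are positive on `(0,1]`, and `ρ_∞ = ∫₀¹ d d̃`: for each `s ∈ (0, √ρ_∞)` the
equation `∫₀¹ d(x)d̃(x)/(s² + d(x)d̃(x) u) dx = 1` has a unique positive solution
`u_∞(s)`; extended by `0` for `s ≥ √ρ_∞`, the function `u_∞` is continuous on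
`(0,∞)`; and `u_∞(s) → 1` as `s ↓ 0`. -/
theorem sampled_separable_scalar_equation
    (d dt : ℝ → ℝ)
    (hdc : ContinuousOn d (Set.Icc 0 1)) (hdtc : ContinuousOn dt (Set.Icc 0 1))
    (hd0 : ∀ x ∈ Set.Icc (0:ℝ) 1, 0 ≤ d x ∧ 0 ≤ dt x)
    (hdpos : ∀ x ∈ Set.Ioc (0:ℝ) 1, 0 < d x ∧ 0 < dt x)
    (ρ : ℝ) (hρ : ρ = ∫ x in Set.Icc (0:ℝ) 1, d x * dt x) :
    ∃ u : ℝ → ℝ,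
      (∀ s ∈ Set.Ioo 0 (Real.sqrt ρ),
        0 < u s ∧
        (∫ x in Set.Icc (0:ℝ) 1, d x * dt x / (s ^ 2 + d x * dt x * u s)) = 1 ∧
        ∀ v : ℝ, 0 < v →
          (∫ x in Set.Icc (0:ℝ) 1, d x * dt x / (s ^ 2 + d x * dt x * v)) = 1 →
          v = u s) ∧
      (∀ s, Real.sqrt ρ ≤ s → u s = 0) ∧
      ContinuousOn u (Set.Ioi 0) ∧
      Filter.Tendsto u (nhdsWithin 0 (Set.Ioi 0)) (nhds 1) :=
  sampled_separable_scalar_equation_general d dt hdc hdtc hdpos ρ hρ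
end

section
/- Let d, d̃ : [0,1] → [0,∞) be continuous functions with d(x) > 0 and d̃(x) > 0 for all x ∈ (0,1], set ρ_∞ = ∫_0^1 d(x) d̃(x) dx, and for s ∈ (0, √ρ_∞) let u_∞(s) > 0 be the unique positive solution of ∫_0^1 d(x) d̃(x)/(s² + d(x) d̃(x) u_∞(s)) dx = 1. Then u_∞ is continuously differentiable on (0, √ρ_∞) and u_∞'(s) = −2s · ( ∫_0^1 d(x) d̃(x)/(s² + d(x) d̃(x) u_∞(s))² dx ) / ( ∫_0^1 d(x)² d̃(x)²/(s² + d(x) d̃(x) u_∞(s))² dx ). -/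
/-!
Write `P_s = s² + f u(s)` with `f = d d̃`. Subtracting the master equations at `s` and `t` gives
`(u t - u s) ∫ f² / (P_s P_t) = (s² - t²) ∫ f / (P_s P_t)`, so the difference quotient of `u`
is `-(s + t) ∫ f / (P_s P_t) / ∫ f² / (P_s P_t)`. The denominator stays away from zero:
`u ≤ |[0,1]| = 1` since `u f / P_s ≤ 1`, and `∫ f² > 0` since the master equation rules out
`f = 0` a.e. This first makes `u` continuous, and then dominated convergence lets `t → s` in both
integrals. Lebesgue measure on `[0,1]` is replaced by an arbitrary finite measure `μ`, and `f` by
any a.e. measurable function with `0 ≤ f ≤ M` a.e.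
-/

open MeasureTheory Real Filter Set Topology

variable {α : Type*} [MeasurableSpace α] {μ : Measure α} {f : α → ℝ} {u : ℝ → ℝ} {U : Set ℝ}
  {M : ℝ}

def SolvesMasterEquation (μ : Measure α) (f : α → ℝ) (u : ℝ → ℝ) (U : Set ℝ) : Prop :=
  ∀ s ∈ U, 0 < s ∧ 0 < u s ∧ ∫ x, f x / (s ^ 2 + f x * u s) ∂μ = 1

noncomputable def pairIntegral (μ : Measure α) (f : α → ℝ) (u : ℝ → ℝ) (n : ℕ) (s t : ℝ) : ℝ :=
  ∫ x, f x ^ n / ((s ^ 2 + f x * u s) * (t ^ 2 + f x * u t)) ∂μ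

lemma pairIntegral_self (n : ℕ) (s : ℝ) :
    pairIntegral μ f u n s s = ∫ x, f x ^ n / (s ^ 2 + f x * u s) ^ 2 ∂μ := by
  simp only [pairIntegral, sq (_ + _)]

lemma sq_add_mul_pos {s y a : ℝ} (hs : 0 < s) (hy : 0 ≤ y) (ha : 0 ≤ a) : 0 < s ^ 2 + y * a :=
  add_pos_of_pos_of_nonneg (pow_pos hs 2) (mul_nonneg hy ha)

lemma norm_pow_div_le {y M a b s t : ℝ} (n : ℕ) (hy : y ∈ Icc 0 M) (ha : 0 ≤ a) (hb : 0 ≤ b)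
    (hs : 0 < s) (ht : 0 < t) :
    ‖y ^ n / ((s ^ 2 + y * a) * (t ^ 2 + y * b))‖ ≤ M ^ n / (s ^ 2 * t ^ 2) := by
  have hsa : s ^ 2 ≤ s ^ 2 + y * a := le_add_of_nonneg_right (mul_nonneg hy.1 ha)
  have htb : t ^ 2 ≤ t ^ 2 + y * b := le_add_of_nonneg_right (mul_nonneg hy.1 hb)
  rw [Real.norm_of_nonneg (div_nonneg (pow_nonneg hy.1 n)
    (mul_pos (sq_add_mul_pos hs hy.1 ha) (sq_add_mul_pos ht hy.1 hb)).le)]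
  exact div_le_div₀ (pow_nonneg (hy.1.trans hy.2) n) (pow_le_pow_left₀ hy.1 hy.2 n)
    (by positivity) (mul_le_mul hsa htb (by positivity) (sq_add_mul_pos hs hy.1 ha).le)

lemma integrable_sq [IsFiniteMeasure μ] (hf : AEMeasurable f μ) (hfM : ∀ᵐ x ∂μ, f x ∈ Icc 0 M) :
    Integrable (fun x => f x ^ 2) μ := by
  refine .of_bound (by fun_prop : AEMeasurable _ μ).aestronglyMeasurable (M ^ 2) ?_
  filter_upwards [hfM] with x hx
  simpa using pow_le_pow_left₀ hx.1 hx.2 2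

namespace SolvesMasterEquation

lemma bound_nonneg (hfM : ∀ᵐ x ∂μ, f x ∈ Icc 0 M) (hu : SolvesMasterEquation μ f u U)
    {s : ℝ} (hs : s ∈ U) : 0 ≤ M := by
  have hμ : μ ≠ 0 := by
    rintro rfl
    simpa using (hu s hs).2.2
  have := ae_neBot.2 hμ
  obtain ⟨x, hx⟩ := hfM.exists
  exact hx.1.trans hx.2

variable [IsFiniteMeasure μ]

lemma integrable_div (hf : AEMeasurable f μ) (hfM : ∀ᵐ x ∂μ, f x ∈ Icc 0 M)
    (hu : SolvesMasterEquation μ f u U) {s : ℝ} (hs : s ∈ U) :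
    Integrable (fun x => f x / (s ^ 2 + f x * u s)) μ := by
  obtain ⟨hs0, hus, -⟩ := hu s hs
  refine .of_bound (by fun_prop : AEMeasurable _ μ).aestronglyMeasurable (M / s ^ 2) ?_
  filter_upwards [hfM] with x hx
  rw [Real.norm_of_nonneg (div_nonneg hx.1 (sq_add_mul_pos hs0 hx.1 hus.le).le)]
  exact div_le_div₀ (hx.1.trans hx.2) hx.2 (by positivity)
    (le_add_of_nonneg_right (mul_nonneg hx.1 hus.le))

lemma integrable_pairIntegrand (hf : AEMeasurable f μ) (hfM : ∀ᵐ x ∂μ, f x ∈ Icc 0 M)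
    (hu : SolvesMasterEquation μ f u U) (n : ℕ) {s t : ℝ} (hs : s ∈ U) (ht : t ∈ U) :
    Integrable (fun x => f x ^ n / ((s ^ 2 + f x * u s) * (t ^ 2 + f x * u t))) μ := by
  obtain ⟨hs0, hus, -⟩ := hu s hs
  obtain ⟨ht0, hut, -⟩ := hu t ht
  refine .of_bound (by fun_prop : AEMeasurable _ μ).aestronglyMeasurable
    (M ^ n / (s ^ 2 * t ^ 2)) ?_
  filter_upwards [hfM] with x hx
  exact norm_pow_div_le n hx hus.le hut.le hs0 ht0

lemma le_measureReal_univ (hf : AEMeasurable f μ) (hfM : ∀ᵐ x ∂μ, f x ∈ Icc 0 M)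
    (hu : SolvesMasterEquation μ f u U) {s : ℝ} (hs : s ∈ U) : u s ≤ μ.real univ := by
  obtain ⟨hs0, hus, heq⟩ := hu s hs
  calc u s = ∫ x, u s * (f x / (s ^ 2 + f x * u s)) ∂μ := by rw [integral_const_mul, heq, mul_one]
    _ ≤ ∫ _, (1 : ℝ) ∂μ := by
      refine integral_mono_ae ((hu.integrable_div hf hfM hs).const_mul _) (integrable_const _) ?_
      filter_upwards [hfM] with x hx
      rw [mul_div_assoc', div_le_one (sq_add_mul_pos hs0 hx.1 hus.le), mul_comm]
      exact le_add_of_nonneg_left (sq_nonneg s)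
    _ = μ.real univ := by simp

lemma integral_sq_pos (hf : AEMeasurable f μ) (hfM : ∀ᵐ x ∂μ, f x ∈ Icc 0 M)
    (hu : SolvesMasterEquation μ f u U) {s : ℝ} (hs : s ∈ U) : 0 < ∫ x, f x ^ 2 ∂μ := by
  refine (integral_nonneg fun x => sq_nonneg (f x)).lt_of_ne fun h => ?_
  have hzero : f =ᵐ[μ] 0 := by
    filter_upwards [(integral_eq_zero_iff_of_nonneg (fun x => sq_nonneg (f x))
      (integrable_sq hf hfM)).1 h.symm] with x hx
    simpa using hx
  have hvanish : (fun x => f x / (s ^ 2 + f x * u s)) =ᵐ[μ] 0 :=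
    hzero.mono fun x hx => by simp [hx]
  have := (hu s hs).2.2
  rw [integral_congr_ae hvanish] at this
  simp at this

lemma sub_mul_pairIntegral_two (hf : AEMeasurable f μ) (hfM : ∀ᵐ x ∂μ, f x ∈ Icc 0 M)
    (hu : SolvesMasterEquation μ f u U) {s t : ℝ} (hs : s ∈ U) (ht : t ∈ U) :
    (u t - u s) * pairIntegral μ f u 2 s t = (s ^ 2 - t ^ 2) * pairIntegral μ f u 1 s t := by
  obtain ⟨hs0, hus, heqs⟩ := hu s hs
  obtain ⟨ht0, hut, heqt⟩ := hu t ht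
  have hdiff : ∫ x, (f x / (t ^ 2 + f x * u t) - f x / (s ^ 2 + f x * u s)) ∂μ = 0 := by
    rw [integral_sub (hu.integrable_div hf hfM ht) (hu.integrable_div hf hfM hs), heqs, heqt,
      sub_self]
  have hsplit : (fun x => f x / (t ^ 2 + f x * u t) - f x / (s ^ 2 + f x * u s)) =ᵐ[μ]
      fun x => (s ^ 2 - t ^ 2) * (f x ^ 1 / ((s ^ 2 + f x * u s) * (t ^ 2 + f x * u t)))
        + (u s - u t) * (f x ^ 2 / ((s ^ 2 + f x * u s) * (t ^ 2 + f x * u t))) := by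
    filter_upwards [hfM] with x hx
    have := sq_add_mul_pos hs0 hx.1 hus.le
    have := sq_add_mul_pos ht0 hx.1 hut.le
    field_simp
    ring
  rw [integral_congr_ae hsplit, integral_add
    ((hu.integrable_pairIntegrand hf hfM 1 hs ht).const_mul _)
    ((hu.integrable_pairIntegrand hf hfM 2 hs ht).const_mul _),
    integral_const_mul, integral_const_mul] at hdiff
  unfold pairIntegral
  linarith

lemma integral_sq_div_le_pairIntegral_two (hf : AEMeasurable f μ) (hfM : ∀ᵐ x ∂μ, f x ∈ Icc 0 M)
    (hu : SolvesMasterEquation μ f u U) {s t : ℝ} (hs : s ∈ U) (ht : t ∈ U) :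
    (∫ x, f x ^ 2 ∂μ) / ((s ^ 2 + M * μ.real univ) * (t ^ 2 + M * μ.real univ))
      ≤ pairIntegral μ f u 2 s t := by
  obtain ⟨hs0, hus, -⟩ := hu s hs
  obtain ⟨ht0, hut, -⟩ := hu t ht
  have hsc := hu.le_measureReal_univ hf hfM hs
  have htc := hu.le_measureReal_univ hf hfM ht
  rw [← integral_div]
  refine integral_mono_ae ?_ (hu.integrable_pairIntegrand hf hfM 2 hs ht) ?_
  · exact (integrable_sq hf hfM).div_const _
  · filter_upwards [hfM] with x hx
    have hM : 0 ≤ M := hx.1.trans hx.2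
    have hP := sq_add_mul_pos hs0 hx.1 hus.le
    have hQ := sq_add_mul_pos ht0 hx.1 hut.le
    refine div_le_div_of_nonneg_left (sq_nonneg _) (mul_pos hP hQ)
      (mul_le_mul ?_ ?_ hQ.le (hP.le.trans ?_)) <;>
    gcongr <;> exact hx.2

lemma integral_sq_div_pos (hf : AEMeasurable f μ) (hfM : ∀ᵐ x ∂μ, f x ∈ Icc 0 M)
    (hu : SolvesMasterEquation μ f u U) {s t : ℝ} (hs : s ∈ U) (ht : t ∈ U) :
    0 < (∫ x, f x ^ 2 ∂μ) / ((s ^ 2 + M * μ.real univ) * (t ^ 2 + M * μ.real univ)) := by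
  have hM := hu.bound_nonneg hfM hs
  exact div_pos (hu.integral_sq_pos hf hfM hs) (mul_pos
    (sq_add_mul_pos (hu s hs).1 hM measureReal_nonneg)
    (sq_add_mul_pos (hu t ht).1 hM measureReal_nonneg))

lemma pairIntegral_two_pos (hf : AEMeasurable f μ) (hfM : ∀ᵐ x ∂μ, f x ∈ Icc 0 M)
    (hu : SolvesMasterEquation μ f u U) {s t : ℝ} (hs : s ∈ U) (ht : t ∈ U) :
    0 < pairIntegral μ f u 2 s t :=
  (hu.integral_sq_div_pos hf hfM hs ht).trans_le
    (hu.integral_sq_div_le_pairIntegral_two hf hfM hs ht)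

lemma abs_sub_le (hf : AEMeasurable f μ) (hfM : ∀ᵐ x ∂μ, f x ∈ Icc 0 M)
    (hu : SolvesMasterEquation μ f u U) {s t : ℝ} (hs : s ∈ U) (ht : t ∈ U) :
    |u t - u s| ≤ |s ^ 2 - t ^ 2| * (M / (s ^ 2 * t ^ 2) * μ.real univ) /
      ((∫ x, f x ^ 2 ∂μ) / ((s ^ 2 + M * μ.real univ) * (t ^ 2 + M * μ.real univ))) := by
  obtain ⟨hs0, hus, -⟩ := hu s hs
  obtain ⟨ht0, hut, -⟩ := hu t ht
  have hA : |pairIntegral μ f u 1 s t| ≤ M / (s ^ 2 * t ^ 2) * μ.real univ := by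
    rw [← Real.norm_eq_abs, pairIntegral]
    refine norm_integral_le_of_norm_le_const ?_
    filter_upwards [hfM] with x hx
    simpa using norm_pow_div_le 1 hx hus.le hut.le hs0 ht0
  rw [le_div_iff₀ (hu.integral_sq_div_pos hf hfM hs ht)]
  calc |u t - u s| * _ ≤ |u t - u s| * pairIntegral μ f u 2 s t :=
        mul_le_mul_of_nonneg_left (hu.integral_sq_div_le_pairIntegral_two hf hfM hs ht)
          (abs_nonneg _)
    _ = |s ^ 2 - t ^ 2| * |pairIntegral μ f u 1 s t| := by
        rw [← abs_of_pos (hu.pairIntegral_two_pos hf hfM hs ht), ← abs_mul, ← abs_mul,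
          hu.sub_mul_pairIntegral_two hf hfM hs ht]
    _ ≤ _ := mul_le_mul_of_nonneg_left hA (abs_nonneg _)

lemma continuousOn (hf : AEMeasurable f μ) (hfM : ∀ᵐ x ∂μ, f x ∈ Icc 0 M)
    (hu : SolvesMasterEquation μ f u U) (hU : IsOpen U) : ContinuousOn u U := by
  intro s hs
  have hs0 := (hu s hs).1
  have hM := hu.bound_nonneg hfM hs
  have hint := (hu.integral_sq_pos hf hfM hs).ne'
  have hc : 0 ≤ μ.real univ := measureReal_nonneg
  have hlim : ContinuousAt (fun t => |s ^ 2 - t ^ 2| * (M / (s ^ 2 * t ^ 2) * μ.real univ) /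
      ((∫ x, f x ^ 2 ∂μ) / ((s ^ 2 + M * μ.real univ) * (t ^ 2 + M * μ.real univ)))) s := by
    fun_prop (disch := positivity)
  rw [ContinuousAt, sub_self, abs_zero, zero_mul, zero_div] at hlim
  refine ContinuousAt.continuousWithinAt (tendsto_iff_dist_tendsto_zero.2 ?_)
  refine squeeze_zero' (.of_forall fun _ => dist_nonneg) ?_ hlim
  filter_upwards [hU.mem_nhds hs] with t ht
  exact (Real.dist_eq _ _).trans_le (hu.abs_sub_le hf hfM hs ht)

lemma continuousOn_pairIntegral (hf : AEMeasurable f μ) (hfM : ∀ᵐ x ∂μ, f x ∈ Icc 0 M)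
    (hu : SolvesMasterEquation μ f u U) (hU : IsOpen U) (n : ℕ) :
    ContinuousOn (fun p : ℝ × ℝ => pairIntegral μ f u n p.1 p.2) (U ×ˢ U) := by
  rintro ⟨s, t⟩ ⟨hs, ht⟩
  obtain ⟨hs0, hus, -⟩ := hu s hs
  obtain ⟨ht0, hut, -⟩ := hu t ht
  have hM := hu.bound_nonneg hfM hs
  have hsc := (hu.continuousOn hf hfM hU).continuousAt (hU.mem_nhds hs)
  have htc := (hu.continuousOn hf hfM hU).continuousAt (hU.mem_nhds ht)
  refine ContinuousAt.continuousWithinAt (continuousAt_of_dominated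
    (bound := fun _ => M ^ n / ((s / 2) ^ 2 * (t / 2) ^ 2))
    (.of_forall fun _ => (by fun_prop : AEMeasurable _ μ).aestronglyMeasurable) ?_
    (integrable_const _) ?_)
  · have hnear : ∀ᶠ p : ℝ × ℝ in 𝓝 (s, t), p ∈ U ×ˢ U ∧ s / 2 < p.1 ∧ t / 2 < p.2 :=
      Filter.Eventually.and ((hU.prod hU).mem_nhds ⟨hs, ht⟩) <|
        (continuousAt_fst.eventually (lt_mem_nhds (half_lt_self hs0))).and
        (continuousAt_snd.eventually (lt_mem_nhds (half_lt_self ht0)))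
    filter_upwards [hnear] with p ⟨⟨hp1, hp2⟩, hs2, ht2⟩
    filter_upwards [hfM] with x hx
    refine (norm_pow_div_le n hx (hu p.1 hp1).2.1.le (hu p.2 hp2).2.1.le
      (hu p.1 hp1).1 (hu p.2 hp2).1).trans ?_
    gcongr
  · filter_upwards [hfM] with x hx
    have := hx.1
    fun_prop (disch := positivity)

lemma slope_eq (hf : AEMeasurable f μ) (hfM : ∀ᵐ x ∂μ, f x ∈ Icc 0 M)
    (hu : SolvesMasterEquation μ f u U) {s t : ℝ} (hs : s ∈ U) (ht : t ∈ U) (hts : t ≠ s) :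
    slope u s t = -(s + t) * pairIntegral μ f u 1 s t / pairIntegral μ f u 2 s t := by
  rw [slope_def_field, div_eq_div_iff (sub_ne_zero.2 hts)
    (hu.pairIntegral_two_pos hf hfM hs ht).ne']
  linear_combination hu.sub_mul_pairIntegral_two hf hfM hs ht

lemma hasDerivAt (hf : AEMeasurable f μ) (hfM : ∀ᵐ x ∂μ, f x ∈ Icc 0 M)
    (hu : SolvesMasterEquation μ f u U) (hU : IsOpen U) {s : ℝ} (hs : s ∈ U) :
    HasDerivAt u (-2 * s * pairIntegral μ f u 1 s s / pairIntegral μ f u 2 s s) s := by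
  have hsection (n : ℕ) : ContinuousAt (fun t => pairIntegral μ f u n s t) s :=
    ContinuousAt.comp (f := fun t => (s, t))
      (g := fun p : ℝ × ℝ => pairIntegral μ f u n p.1 p.2)
      ((hu.continuousOn_pairIntegral hf hfM hU n).continuousAt
        ((hU.prod hU).mem_nhds ⟨hs, hs⟩)) (continuousAt_const.prodMk continuousAt_id)
  have hlim : ContinuousAt
      (fun t => -(s + t) * pairIntegral μ f u 1 s t / pairIntegral μ f u 2 s t) s :=
    ((continuousAt_const.add continuousAt_id).neg.mul (hsection 1)).div (hsection 2)
      (hu.pairIntegral_two_pos hf hfM hs hs).ne'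
  rw [hasDerivAt_iff_tendsto_slope]
  convert (hlim.tendsto.mono_left nhdsWithin_le_nhds).congr' ?_ using 2
  · ring
  · filter_upwards [self_mem_nhdsWithin, nhdsWithin_le_nhds (hU.mem_nhds hs)] with t hts ht
    exact (hu.slope_eq hf hfM hs ht hts).symm

lemma continuousOn_deriv (hf : AEMeasurable f μ) (hfM : ∀ᵐ x ∂μ, f x ∈ Icc 0 M)
    (hu : SolvesMasterEquation μ f u U) (hU : IsOpen U) : ContinuousOn (deriv u) U := by
  have hdiag (n : ℕ) : ContinuousOn (fun s => pairIntegral μ f u n s s) U :=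
    ContinuousOn.comp (f := fun s => (s, s))
      (g := fun p : ℝ × ℝ => pairIntegral μ f u n p.1 p.2)
      (hu.continuousOn_pairIntegral hf hfM hU n) (continuousOn_id.prodMk continuousOn_id)
      fun s hs => ⟨hs, hs⟩
  refine ContinuousOn.congr ?_ fun s hs => (hu.hasDerivAt hf hfM hU hs).deriv
  exact ((continuousOn_const.mul continuousOn_id).mul (hdiag 1)).div (hdiag 2)
    fun s hs => (hu.pairIntegral_two_pos hf hfM hs hs).ne'

end SolvesMasterEquation

theorem sampled_separable_derivative_general
    (d dt : ℝ → ℝ)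
    (hdc : ContinuousOn d (Set.Icc 0 1)) (hdtc : ContinuousOn dt (Set.Icc 0 1))
    (hd0 : ∀ x ∈ Set.Icc (0:ℝ) 1, 0 ≤ d x ∧ 0 ≤ dt x)
    (ρ : ℝ)
    (u : ℝ → ℝ)
    (hu : ∀ s ∈ Set.Ioo 0 (Real.sqrt ρ),
      0 < u s ∧
      (∫ x in Set.Icc (0:ℝ) 1, d x * dt x / (s ^ 2 + d x * dt x * u s)) = 1) :
    (∀ s ∈ Set.Ioo 0 (Real.sqrt ρ),
      HasDerivAt u
        (-2 * s *
          (∫ x in Set.Icc (0:ℝ) 1,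
            d x * dt x / (s ^ 2 + d x * dt x * u s) ^ 2) /
          (∫ x in Set.Icc (0:ℝ) 1,
            (d x) ^ 2 * (dt x) ^ 2 / (s ^ 2 + d x * dt x * u s) ^ 2)) s) ∧
    ContinuousOn (deriv u) (Set.Ioo 0 (Real.sqrt ρ)) := by
  obtain ⟨M, hM⟩ := isCompact_Icc.exists_bound_of_continuousOn (hdc.mul hdtc)
  have hf : AEMeasurable (fun x => d x * dt x) (volume.restrict (Icc 0 1)) :=
    (hdc.mul hdtc).aemeasurable measurableSet_Icc
  have hfM : ∀ᵐ x ∂volume.restrict (Icc (0:ℝ) 1), d x * dt x ∈ Icc 0 M :=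
    ae_restrict_of_forall_mem measurableSet_Icc fun x hx =>
      ⟨mul_nonneg (hd0 x hx).1 (hd0 x hx).2, (le_abs_self _).trans (hM x hx)⟩
  have hsol : SolvesMasterEquation (volume.restrict (Icc 0 1)) (fun x => d x * dt x) u
      (Ioo 0 √ρ) := fun s hs => ⟨hs.1, hu s hs⟩
  refine ⟨fun s hs => ?_, hsol.continuousOn_deriv hf hfM isOpen_Ioo⟩
  simpa only [pairIntegral_self, pow_one, mul_pow] using hsol.hasDerivAt hf hfM isOpen_Ioo hs

/-- For a sampled separable variance profile with continuous `d, d̃ : [0,1] → [0,∞)`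
positive on `(0,1]` and `ρ_∞ = ∫₀¹ d d̃`, the solution `u_∞` of the scalar master
equation is continuously differentiable on `(0, √ρ_∞)` with derivative
`u_∞'(s) = −2s (∫₀¹ dd̃/(s²+dd̃u)² dx)/(∫₀¹ d²d̃²/(s²+dd̃u)² dx)`. -/
theorem sampled_separable_derivative
    (d dt : ℝ → ℝ)
    (hdc : ContinuousOn d (Set.Icc 0 1)) (hdtc : ContinuousOn dt (Set.Icc 0 1))
    (hd0 : ∀ x ∈ Set.Icc (0:ℝ) 1, 0 ≤ d x ∧ 0 ≤ dt x)
    (hdpos : ∀ x ∈ Set.Ioc (0:ℝ) 1, 0 < d x ∧ 0 < dt x)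
    (ρ : ℝ) (hρ : ρ = ∫ x in Set.Icc (0:ℝ) 1, d x * dt x)
    (u : ℝ → ℝ)
    (hu : ∀ s ∈ Set.Ioo 0 (Real.sqrt ρ),
      0 < u s ∧
      (∫ x in Set.Icc (0:ℝ) 1, d x * dt x / (s ^ 2 + d x * dt x * u s)) = 1) :
    (∀ s ∈ Set.Ioo 0 (Real.sqrt ρ),
      HasDerivAt u
        (-2 * s *
          (∫ x in Set.Icc (0:ℝ) 1,
            d x * dt x / (s ^ 2 + d x * dt x * u s) ^ 2) /
          (∫ x in Set.Icc (0:ℝ) 1,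
            (d x) ^ 2 * (dt x) ^ 2 / (s ^ 2 + d x * dt x * u s) ^ 2)) s) ∧
    ContinuousOn (deriv u) (Set.Ioo 0 (Real.sqrt ρ)) :=
  sampled_separable_derivative_general d dt hdc hdtc hd0 ρ u hu
end
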